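/- arXiv:2603.07210 — 6 statements merged into one kernel-verified Lean document; each statement's English description precedes it below -/
import Mathlib

section
/- Let T be a tensor field of type (p,q) on ℂⁿ, not identically zero, such that L_F T = 0 for every analytic vector field F on ℂⁿ (i.e., T is a trivial tensor invariant). Then every component T^{i₁⋯i_p}_{j₁⋯j_q} is a constant function, p = q, and T^{i₁⋯i_p}_{j₁⋯j_p} = 0 whenever the tuple (j₁,…,j_p) is not a permutation of the tuple (i₁,…,i_p). -/
/-!
Testing the invariance against the constant fields `∂_s` shows that every partial derivative
of every component vanishes, so the (analytic) components are constant. Testing it against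
the scaling field `x^ν ∂_ν` then leaves only the zeroth-order terms of the Lie derivative:
`(#{a | j a = ν} - #{b | i b = ν}) T^i_j = 0`. Hence a nonzero component `T^i_j` has `j` a
permutation of `i`, and the existence of one such component forces `p = q`.
-/

open scoped BigOperators

/-- Partial derivative of `f : ℂⁿ → ℂ` in the `s`-th coordinate direction at `x`. -/
noncomputable def pderivC {n : ℕ} (f : (Fin n → ℂ) → ℂ) (s : Fin n) (x : Fin n → ℂ) : ℂ :=
  fderiv ℂ f x (Pi.single s 1)

/-- Components of the Lie derivative `L_F T` of a type-`(p,q)` tensor field `T` on `ℂⁿ`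
along the vector field `F`. -/
noncomputable def lieDeriv {n p q : ℕ} (F : Fin n → (Fin n → ℂ) → ℂ)
    (T : (Fin p → Fin n) → (Fin q → Fin n) → (Fin n → ℂ) → ℂ)
    (i : Fin p → Fin n) (j : Fin q → Fin n) (x : Fin n → ℂ) : ℂ :=
  (∑ s, F s x * pderivC (T i j) s x)
    + ∑ a : Fin q, ∑ k, T i (Function.update j a k) x * pderivC (F k) (j a) x
    - ∑ b : Fin p, ∑ l, T (Function.update i b l) j x * pderivC (F (i b)) l x

open Finset

section PartialDerivatives

variable {n : ℕ}

lemma pderivC_const (c : ℂ) (s : Fin n) (x : Fin n → ℂ) :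
    pderivC (fun _ => c) s x = 0 := by
  simp [pderivC]

lemma pderivC_coord (ν s : Fin n) (x : Fin n → ℂ) :
    pderivC (fun y => y ν) s x = if ν = s then 1 else 0 := by
  simp [pderivC, fderiv_apply, Pi.single_apply]

lemma eq_of_pderivC_eq_zero {f : (Fin n → ℂ) → ℂ} (hf : Differentiable ℂ f)
    (h : ∀ s x, pderivC f s x = 0) (x y : Fin n → ℂ) : f x = f y := by
  refine is_const_of_fderiv_eq_zero hf (fun z => ?_) x y
  exact ContinuousLinearMap.coe_injective <| LinearMap.pi_ext' fun s =>
    LinearMap.ext_ring (by simpa [pderivC] using h s z)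

end PartialDerivatives

lemma sum_ite_eq_count_mul {m n : ℕ} (j : Fin m → Fin n) (ν : Fin n) (c : ℂ) :
    ∑ a, (if ν = j a then c else 0) = Multiset.count ν ↑(List.ofFn j) * c := by
  rw [sum_ite, sum_const, sum_const_zero, add_zero, nsmul_eq_mul, ← Fin.univ_val_map,
    Multiset.count_map]
  rfl

section LieDerivative

variable {n p q : ℕ} (T : (Fin p → Fin n) → (Fin q → Fin n) → (Fin n → ℂ) → ℂ)
  (i : Fin p → Fin n) (j : Fin q → Fin n) (x : Fin n → ℂ)

lemma lieDeriv_const_field (c : Fin n → ℂ) :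
    lieDeriv (fun k _ => c k) T i j x = ∑ s, c s * pderivC (T i j) s x := by
  simp [lieDeriv, pderivC_const]

def scalingField (ν : Fin n) : Fin n → (Fin n → ℂ) → ℂ :=
  fun k y => if k = ν then y ν else 0

lemma analyticOnNhd_scalingField (ν k : Fin n) :
    AnalyticOnNhd ℂ (scalingField ν k) Set.univ := by
  unfold scalingField
  split_ifs
  · exact (ContinuousLinearMap.proj ν : (Fin n → ℂ) →L[ℂ] ℂ).analyticOnNhd _
  · exact analyticOnNhd_const

lemma pderivC_scalingField (ν k l : Fin n) (y : Fin n → ℂ) :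
    pderivC (scalingField ν k) l y = if k = ν ∧ ν = l then 1 else 0 := by
  unfold scalingField
  split_ifs with hk <;> simp_all [pderivC_coord, pderivC_const]

lemma lieDeriv_scalingField (ν : Fin n) :
    lieDeriv (scalingField ν) T i j x = x ν * pderivC (T i j) ν x
      + (Multiset.count ν ↑(List.ofFn j) - Multiset.count ν ↑(List.ofFn i)) * T i j x := by
  have lower : ∀ a, ∑ k, T i (Function.update j a k) x * pderivC (scalingField ν k) (j a) x
      = if ν = j a then T i j x else 0 := by
    intro a
    split_ifs with h <;> simp [pderivC_scalingField, h]
  have upper : ∀ b, ∑ l, T (Function.update i b l) j x * pderivC (scalingField ν (i b)) l x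
      = if ν = i b then T i j x else 0 := by
    intro b
    split_ifs with h
    · simp [pderivC_scalingField, h]
    · simp [pderivC_scalingField, Ne.symm h]
  simp only [lieDeriv, lower, upper, sum_ite_eq_count_mul]
  simp only [scalingField, ite_mul, zero_mul, sum_ite_eq', mem_univ, if_true]
  ring

end LieDerivative

def IsTrivialTensorInvariant {n p q : ℕ}
    (T : (Fin p → Fin n) → (Fin q → Fin n) → (Fin n → ℂ) → ℂ) : Prop :=
  ∀ F : Fin n → (Fin n → ℂ) → ℂ,
    (∀ s, AnalyticOnNhd ℂ (F s) Set.univ) → ∀ i j x, lieDeriv F T i j x = 0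

namespace IsTrivialTensorInvariant

variable {n p q : ℕ} {T : (Fin p → Fin n) → (Fin q → Fin n) → (Fin n → ℂ) → ℂ}
  (hT : IsTrivialTensorInvariant T)
include hT

lemma pderivC_eq_zero (i j) (s : Fin n) (x : Fin n → ℂ) : pderivC (T i j) s x = 0 := by
  have h := hT (fun k _ => (Pi.single s 1 : Fin n → ℂ) k) (fun _ => analyticOnNhd_const) i j x
  simpa [lieDeriv_const_field, Pi.single_apply] using h

lemma count_mul_eq (i j) (x : Fin n → ℂ) (ν : Fin n) :
    (Multiset.count ν ↑(List.ofFn j) : ℂ) * T i j x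
      = Multiset.count ν ↑(List.ofFn i) * T i j x := by
  have h := hT (scalingField ν) (analyticOnNhd_scalingField ν) i j x
  rw [lieDeriv_scalingField, hT.pderivC_eq_zero, mul_zero, zero_add] at h
  linear_combination h

lemma ofFn_eq_of_ne_zero {i j} {x : Fin n → ℂ} (hx : T i j x ≠ 0) :
    (↑(List.ofFn j) : Multiset (Fin n)) = ↑(List.ofFn i) :=
  Multiset.ext.mpr fun ν => by exact_mod_cast mul_right_cancel₀ hx (hT.count_mul_eq i j x ν)

end IsTrivialTensorInvariant

/-- A nonzero tensor field of type `(p,q)` on `ℂⁿ` whose Lie derivative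
vanishes along every analytic vector field (a trivial tensor invariant) has constant
components, satisfies `p = q`, and its component `T^{i}_{j}` vanishes whenever the tuple
`j` is not a permutation of the tuple `i`. -/
theorem trivial_tensor_invariant_characterization {n p q : ℕ}
    (T : (Fin p → Fin n) → (Fin q → Fin n) → (Fin n → ℂ) → ℂ)
    (hTan : ∀ i j, AnalyticOnNhd ℂ (T i j) Set.univ)
    (hne : ∃ i j x, T i j x ≠ 0)
    (htriv : ∀ F : Fin n → (Fin n → ℂ) → ℂ,
      (∀ s, AnalyticOnNhd ℂ (F s) Set.univ) →
      ∀ i j x, lieDeriv F T i j x = 0) :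
    (∀ i j, ∃ c : ℂ, ∀ x, T i j x = c) ∧ p = q ∧
      (∀ (i : Fin p → Fin n) (j : Fin q → Fin n),
        (↑(List.ofFn j) : Multiset (Fin n)) ≠ ↑(List.ofFn i) →
        ∀ x, T i j x = 0) := by
  have hT : IsTrivialTensorInvariant T := htriv
  refine ⟨fun i j => ⟨T i j 0, fun x => ?_⟩, ?_, fun i j hij x => ?_⟩
  · exact eq_of_pderivC_eq_zero (fun y => (hTan i j y trivial).differentiableAt)
      (hT.pderivC_eq_zero i j) x 0
  · obtain ⟨i, j, x, hx⟩ := hne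
    simpa using congrArg Multiset.card (hT.ofFn_eq_of_ne_zero hx).symm
  · by_contra hx
    exact hij (hT.ofFn_eq_of_ne_zero hx)
end

section
/- Let T be a tensor field of type (1,1) on ℂⁿ such that L_F T = 0 for every analytic vector field F on ℂⁿ. Then there exists a constant c ∈ ℂ such that T^i_j = c·δ^i_j for all i, j ∈ {1,…,n}, where δ^i_j is the Kronecker symbol. -/
open scoped BigOperators

open Matrix

namespace TensorInvariant

variable {n : ℕ}

theorem fderiv_apply_eq_sum_pderivC (f : (Fin n → ℂ) → ℂ) (x v : Fin n → ℂ) :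
    fderiv ℂ f x v = ∑ s, v s * pderivC f s x := by
  conv_lhs => rw [← Finset.univ_sum_single v, map_sum]
  refine Finset.sum_congr rfl fun s _ => ?_
  rw [pderivC, ← smul_eq_mul, ← map_smul, ← Pi.single_smul', smul_eq_mul, mul_one]

theorem lieDeriv_const {p q : ℕ} (v : Fin n → ℂ)
    (T : (Fin p → Fin n) → (Fin q → Fin n) → (Fin n → ℂ) → ℂ)
    (i : Fin p → Fin n) (j : Fin q → Fin n) (x : Fin n → ℂ) :
    lieDeriv (fun k _ => v k) T i j x = fderiv ℂ (T i j) x v := by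
  have hv : ∀ k l, pderivC (fun _ => v k) l x = 0 := by simp [pderivC]
  simp [lieDeriv, hv, fderiv_apply_eq_sum_pderivC]

theorem eq_of_lieDeriv_const_eq_zero {p q : ℕ}
    {T : (Fin p → Fin n) → (Fin q → Fin n) → (Fin n → ℂ) → ℂ}
    (hT : ∀ i j, Differentiable ℂ (T i j))
    (hL : ∀ (v : Fin n → ℂ) i j x, lieDeriv (fun k _ => v k) T i j x = 0) (i : Fin p → Fin n)
    (j : Fin q → Fin n) (x y : Fin n → ℂ) : T i j x = T i j y :=
  is_const_of_fderiv_eq_zero (hT i j)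
    (fun x => ContinuousLinearMap.ext fun v => (lieDeriv_const v T i j x).symm.trans (hL v i j x))
    x y

def linearField (A : Matrix (Fin n) (Fin n) ℂ) : Fin n → (Fin n → ℂ) → ℂ :=
  fun k x => (A *ᵥ x) k

theorem hasFDerivAt_linearField (A : Matrix (Fin n) (Fin n) ℂ) (k : Fin n) (x : Fin n → ℂ) :
    HasFDerivAt (linearField A k)
      ((ContinuousLinearMap.proj k).comp (Matrix.toLin' A).toContinuousLinearMap) x :=
  ((ContinuousLinearMap.proj k).comp (Matrix.toLin' A).toContinuousLinearMap).hasFDerivAt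

theorem analyticOnNhd_linearField (A : Matrix (Fin n) (Fin n) ℂ) (k : Fin n) :
    AnalyticOnNhd ℂ (linearField A k) Set.univ := fun x _ =>
  ((ContinuousLinearMap.proj k).comp (Matrix.toLin' A).toContinuousLinearMap).analyticAt x

theorem pderivC_linearField (A : Matrix (Fin n) (Fin n) ℂ) (k l : Fin n) (x : Fin n → ℂ) :
    pderivC (linearField A k) l x = A k l := by
  simp [pderivC, (hasFDerivAt_linearField A k x).fderiv]

def componentMatrix (T : (Fin 1 → Fin n) → (Fin 1 → Fin n) → (Fin n → ℂ) → ℂ)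
    (x : Fin n → ℂ) : Matrix (Fin n) (Fin n) ℂ :=
  Matrix.of fun a b => T (fun _ => a) (fun _ => b) x

theorem lieDeriv_linearField_zero (A : Matrix (Fin n) (Fin n) ℂ)
    (T : (Fin 1 → Fin n) → (Fin 1 → Fin n) → (Fin n → ℂ) → ℂ) (a b : Fin n) :
    lieDeriv (linearField A) T (fun _ => a) (fun _ => b) 0 =
      (componentMatrix T 0 * A - A * componentMatrix T 0) a b := by
  simp only [lieDeriv, linearField, mulVec_zero, Pi.zero_apply, zero_mul, Finset.sum_const_zero,
    Finset.univ_unique, Fin.default_eq_zero, Function.update_eq_const_of_subsingleton,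
    pderivC_linearField, mul_comm, Finset.sum_const, Finset.card_singleton, one_smul, zero_add,
    componentMatrix, Matrix.sub_apply, Matrix.mul_apply, of_apply]
  rfl

theorem apply_eq_componentMatrix (T : (Fin 1 → Fin n) → (Fin 1 → Fin n) → (Fin n → ℂ) → ℂ)
    (i j : Fin 1 → Fin n) (x : Fin n → ℂ) : T i j x = componentMatrix T x (i 0) (j 0) := by
  rw [eq_const_of_subsingleton i 0, eq_const_of_subsingleton j 0]
  rfl

end TensorInvariant

open TensorInvariant in
/-- A type-`(1,1)` tensor field on `ℂⁿ` whose Lie derivative vanishes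
along every analytic vector field is a constant multiple of the Kronecker delta. -/
theorem trivial_tensor_invariant_one_one {n : ℕ}
    (T : (Fin 1 → Fin n) → (Fin 1 → Fin n) → (Fin n → ℂ) → ℂ)
    (hTan : ∀ i j, AnalyticOnNhd ℂ (T i j) Set.univ)
    (htriv : ∀ F : Fin n → (Fin n → ℂ) → ℂ,
      (∀ s, AnalyticOnNhd ℂ (F s) Set.univ) →
      ∀ i j x, lieDeriv F T i j x = 0) :
    ∃ c : ℂ, ∀ (i j : Fin 1 → Fin n) (x : Fin n → ℂ),
      T i j x = if i 0 = j 0 then c else 0 := by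
  have hconst (i j x) : T i j x = T i j 0 :=
    eq_of_lieDeriv_const_eq_zero (fun i j x => (hTan i j x trivial).differentiableAt)
      (fun v => htriv _ fun _ _ _ => analyticAt_const) i j x 0
  have hcomm (A : Matrix (Fin n) (Fin n) ℂ) : Commute A (componentMatrix T 0) := by
    refine (sub_eq_zero.mp (Matrix.ext fun a b => ?_)).symm
    rw [← lieDeriv_linearField_zero]
    exact htriv _ (analyticOnNhd_linearField A) _ _ _
  obtain ⟨c, hc⟩ := mem_range_scalar_iff_commute_single'.mpr fun a b => hcomm (single a b 1)
  refine ⟨c, fun i j x => ?_⟩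
  rw [hconst, apply_eq_componentMatrix T, ← hc, scalar_apply, diagonal_apply]
end

section
/- Let A be an n×n complex matrix and consider the linear system ẋ = Ax on ℂⁿ. If T is an analytic tensor invariant of type (p,q) of this system in a neighbourhood of 0, written as T = T^{(k)} + T^{(k+1)} + ⋯, where for each r ≥ k, T^{(r)} is a tensor field of type (p,q) whose components are homogeneous polynomials of degree r, then each T^{(r)} (r = k, k+1, …) is a tensor invariant of the system ẋ = Ax. -/
open scoped BigOperators

/-- An entire function `h : ℂⁿ → ℂ` that is a homogeneous polynomial of degree `r`
(characterized analytically by the scaling law `h(c • x) = c^r h(x)`). -/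
def IsHomogDeg {n : ℕ} (r : ℕ) (h : (Fin n → ℂ) → ℂ) : Prop :=
  AnalyticOnNhd ℂ h Set.univ ∧ ∀ (c : ℂ) (x : Fin n → ℂ), h (c • x) = c ^ r * h x

/-- The linear vector field `x ↦ Ax`. -/
noncomputable def linVF {n : ℕ} (A : Matrix (Fin n) (Fin n) ℂ) :
    Fin n → (Fin n → ℂ) → ℂ :=
  fun s x => ∑ t, A s t * x t

/-! Along a line through the origin, `c ↦ T (c • x)` has the power series `∑ cʳ T⁽ʳ⁾(x)`.
The Lie derivative along a linear field maps degree-`r` homogeneous tensors to degree-`r`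
homogeneous tensors, so `L_A T (c • x) = ∑ cʳ (L_A T⁽ʳ⁾)(x)`; the left side vanishes for small `c`,
hence so does every coefficient. Differentiating the expansion termwise is legitimate because the
homogeneous parts are the diagonal terms of the power series of `T` at `0`, which gives a summable
bound near `0`. -/

open Filter Topology

section PowerSeries

variable {𝕜 : Type*} [NontriviallyNormedField 𝕜] {E F : Type*}
  [NormedAddCommGroup E] [NormedSpace 𝕜 E] [NormedAddCommGroup F] [NormedSpace 𝕜 F]

theorem eq_zero_of_eventually_hasSum_pow_smul {a : ℕ → F}
    (h : ∀ᶠ c in 𝓝 (0 : 𝕜), HasSum (fun m => c ^ m • a m) 0) : a = 0 := by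
  let p : FormalMultilinearSeries 𝕜 𝕜 F := fun m =>
    ContinuousMultilinearMap.mkPiRing 𝕜 (Fin m) (a m)
  have hp : ∀ m c, p m (fun _ => c) = c ^ m • a m := fun m c => by
    simp [p, ContinuousMultilinearMap.mkPiRing_apply]
  obtain ⟨ε, hε, hball⟩ := Metric.eventually_nhds_iff_ball.1 h
  obtain ⟨c₀, hc₀, hc₀ε⟩ := NormedField.exists_norm_lt 𝕜 hε
  have hrad : (‖c₀‖₊ : ENNReal) ≤ p.radius := by
    refine p.le_radius_of_tendsto (l := 0) ?_
    have := ((hball c₀ (by simpa using hc₀ε)).summable.tendsto_atTop_zero).norm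
    simpa [p, ContinuousMultilinearMap.norm_mkPiRing, norm_smul, norm_pow, mul_comm] using this
  have hzero : HasFPowerSeriesOnBall 0 p 0 ‖c₀‖₊ := by
    refine ⟨hrad, by simpa using hc₀, fun {y} hy => ?_⟩
    have hyc₀ : ‖y‖ < ‖c₀‖ := by simpa using hy
    simpa [hp] using hball y (by simpa using hyc₀.trans hc₀ε)
  funext m
  simpa [hp] using congrArg (fun q : FormalMultilinearSeries 𝕜 𝕜 F => q m (fun _ => 1))
    hzero.hasFPowerSeriesAt.eq_zero

theorem FormalMultilinearSeries.apply_smul_diag (p : FormalMultilinearSeries 𝕜 E F) (m : ℕ)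
    (c : 𝕜) (z : E) : p m (fun _ => c • z) = c ^ m • p m (fun _ => z) := by
  simpa using (p m).map_smul_univ (fun _ => c) (fun _ => z)

theorem HasFPowerSeriesAt.apply_diag_eq_of_hasSum_homogeneous {f : E → F} {g : ℕ → E → F}
    {P : FormalMultilinearSeries 𝕜 E F} (hf : HasFPowerSeriesAt f P 0)
    (hg : ∀ m (c : 𝕜) z, g m (c • z) = c ^ m • g m z)
    (hsum : ∀ᶠ z in 𝓝 0, HasSum (fun m => g m z) (f z)) (m : ℕ) (z : E) :
    g m z = P m (fun _ => z) := by
  obtain ⟨r, hr⟩ := hf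
  have hline : Tendsto (fun c : 𝕜 => c • z) (𝓝 0) (𝓝 0) :=
    (continuous_id.smul continuous_const).tendsto' 0 0 (zero_smul 𝕜 z)
  have hdiff : ∀ᶠ c in 𝓝 (0 : 𝕜), HasSum (fun m => c ^ m • (g m z - P m (fun _ => z))) 0 := by
    filter_upwards [hline.eventually hsum, hline.eventually hr.eventually_hasSum] with c hg' hP
    simpa [smul_sub, hg, P.apply_smul_diag] using hg'.sub hP
  exact sub_eq_zero.1 (congrFun (eq_zero_of_eventually_hasSum_pow_smul hdiff) m)

theorem AnalyticAt.exists_summable_bound_of_hasSum_homogeneous {f : E → F} {g : ℕ → E → F}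
    (hf : AnalyticAt 𝕜 f 0) (hg : ∀ m (c : 𝕜) z, g m (c • z) = c ^ m • g m z)
    (hsum : ∀ᶠ z in 𝓝 0, HasSum (fun m => g m z) (f z)) :
    ∃ u : ℕ → ℝ, Summable u ∧ ∀ᶠ z in 𝓝 0, ∀ m, ‖g m z‖ ≤ u m := by
  obtain ⟨P, r, hr⟩ := hf
  obtain ⟨ρ, hρ0, hρr⟩ := ENNReal.lt_iff_exists_nnreal_btwn.1 hr.r_pos
  refine ⟨fun m => ‖P m‖ * ρ ^ m, P.summable_norm_mul_pow (hρr.trans_le hr.r_le), ?_⟩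
  filter_upwards [Metric.ball_mem_nhds (0 : E) (by exact_mod_cast hρ0 : (0 : ℝ) < ρ)] with z hz m
  rw [hr.hasFPowerSeriesAt.apply_diag_eq_of_hasSum_homogeneous hg hsum]
  exact (P m).le_opNorm_mul_pow_of_le (pi_norm_le_iff_of_nonneg ρ.2 |>.2 fun _ => by
    simpa using (mem_ball_zero_iff.1 hz).le)

theorem smul_fderiv_smul_of_homogeneous {h : E → F} {m : ℕ} (hd : Differentiable 𝕜 h)
    (hh : ∀ (c : 𝕜) y, h (c • y) = c ^ m • h y) (c : 𝕜) (x : E) :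
    c • fderiv 𝕜 h (c • x) = c ^ m • fderiv 𝕜 h x := by
  have hcomp : HasFDerivAt (fun y => h (c • y))
      ((fderiv 𝕜 h (c • x)).comp (c • ContinuousLinearMap.id 𝕜 E)) x :=
    (hd _).hasFDerivAt.comp x ((hasFDerivAt_id x).const_smul c)
  have hscal : HasFDerivAt (fun y => c ^ m • h y) (c ^ m • fderiv 𝕜 h x) x :=
    (hd x).hasFDerivAt.const_smul _
  simp only [hh] at hcomp
  rw [← hcomp.unique hscal]
  ext v
  simp

end PowerSeries

theorem hasSum_fderiv_apply_of_eventually_norm_le {E F : Type*} [NormedAddCommGroup E]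
    [NormedSpace ℂ E] [NormedAddCommGroup F] [NormedSpace ℂ F] [CompleteSpace F] {f : E → F}
    {g : ℕ → E → F} {u : ℕ → ℝ} {x : E} (hu : Summable u)
    (hg : ∀ᶠ y in 𝓝 x, ∀ m, DifferentiableAt ℂ (g m) y) (hf : DifferentiableAt ℂ f x)
    (hsum : ∀ᶠ y in 𝓝 x, HasSum (fun m => g m y) (f y))
    (hle : ∀ᶠ y in 𝓝 x, ∀ m, ‖g m y‖ ≤ u m) (v : E) :
    HasSum (fun m => fderiv ℂ (g m) x v) (fderiv ℂ f x v) := by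
  obtain ⟨O, hO, hOopen, hxO⟩ := mem_nhds_iff.1 (hg.and (hsum.and hle))
  -- On the complex line `t ↦ x + t • v`, uniformly convergent series of holomorphic functions
  -- may be differentiated termwise.
  let L : ℂ → E := fun t => x + t • v
  have hL : ∀ t, HasDerivAt L v t := fun t =>
    (((hasDerivAt_id' t).smul_const v).const_add x).congr_deriv (one_smul ℂ v)
  have hW : IsOpen (L ⁻¹' O) := hOopen.preimage (by fun_prop)
  have h0W : (0 : ℂ) ∈ L ⁻¹' O := by simpa [L] using hxO
  have hderiv : ∀ h : E → F, DifferentiableAt ℂ h x → deriv (h ∘ L) 0 = fderiv ℂ h x v := by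
    intro h hh
    have : HasFDerivAt h (fderiv ℂ h x) (L 0) := by simpa [L] using hh.hasFDerivAt
    exact (this.comp_hasDerivAt 0 (hL 0)).deriv
  have hsum_eq : (fun t => ∑' m, (g m ∘ L) t) =ᶠ[𝓝 0] f ∘ L :=
    eventually_of_mem (hW.mem_nhds h0W) fun t ht => (hO ht).2.1.tsum_eq
  have key := Complex.hasSum_deriv_of_summable_norm (F := fun m => g m ∘ L) hu
    (fun m t ht => ((hO ht).1 m).comp t (hL t).differentiableAt |>.differentiableWithinAt)
    hW (fun m t ht => (hO ht).2.2 m) h0W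
  rw [hsum_eq.deriv_eq, hderiv f hf] at key
  simpa only [hderiv _ ((hO hxO).1 _)] using key

section LieDerivative

variable {n p q : ℕ}

theorem pderivC_linVF (A : Matrix (Fin n) (Fin n) ℂ) (k s : Fin n) (x : Fin n → ℂ) :
    pderivC (linVF A k) s x = A k s := by
  have hlin : linVF A k = ⇑(∑ t, A k t • ContinuousLinearMap.proj (R := ℂ)
      (φ := fun _ : Fin n => ℂ) t) := by
    ext y
    simp [linVF]
  rw [pderivC, hlin, ContinuousLinearMap.fderiv]
  simp [Pi.single_apply]

theorem linVF_smul (A : Matrix (Fin n) (Fin n) ℂ) (s : Fin n) (c : ℂ) (x : Fin n → ℂ) :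
    linVF A s (c • x) = c * linVF A s x := by
  simp only [linVF, Pi.smul_apply, smul_eq_mul, Finset.mul_sum, mul_left_comm]

theorem lieDeriv_linVF (A : Matrix (Fin n) (Fin n) ℂ)
    (S : (Fin p → Fin n) → (Fin q → Fin n) → (Fin n → ℂ) → ℂ)
    (i : Fin p → Fin n) (j : Fin q → Fin n) (x : Fin n → ℂ) :
    lieDeriv (linVF A) S i j x =
      (∑ s, linVF A s x * pderivC (S i j) s x)
        + (∑ a : Fin q, ∑ k, S i (Function.update j a k) x * A k (j a))
        - ∑ b : Fin p, ∑ l, S (Function.update i b l) j x * A (i b) l := by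
  simp only [lieDeriv, pderivC_linVF]

theorem lieDeriv_linVF_smul {m : ℕ} (A : Matrix (Fin n) (Fin n) ℂ)
    {S : (Fin p → Fin n) → (Fin q → Fin n) → (Fin n → ℂ) → ℂ}
    (hS : ∀ i j, IsHomogDeg m (S i j)) (i : Fin p → Fin n) (j : Fin q → Fin n) (c : ℂ)
    (x : Fin n → ℂ) :
    lieDeriv (linVF A) S i j (c • x) = c ^ m * lieDeriv (linVF A) S i j x := by
  have hpderiv : ∀ s, c * pderivC (S i j) s (c • x) = c ^ m * pderivC (S i j) s x := fun s =>
    congrArg (· (Pi.single s 1)) (smul_fderiv_smul_of_homogeneous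
      (fun y => ((hS i j).1 y trivial).differentiableAt) (hS i j).2 c x)
  simp only [lieDeriv_linVF, linVF_smul, (hS _ _).2 c x, mul_sub, mul_add, Finset.mul_sum,
    mul_assoc]
  congr 2
  refine Finset.sum_congr rfl fun s _ => ?_
  linear_combination linVF A s x * hpderiv s

theorem hasSum_lieDeriv (F : Fin n → (Fin n → ℂ) → ℂ)
    {S : ℕ → (Fin p → Fin n) → (Fin q → Fin n) → (Fin n → ℂ) → ℂ}
    {T : (Fin p → Fin n) → (Fin q → Fin n) → (Fin n → ℂ) → ℂ}
    {i : Fin p → Fin n} {j : Fin q → Fin n} {x : Fin n → ℂ}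
    (hval : ∀ i j, HasSum (fun m => S m i j x) (T i j x))
    (hder : ∀ s, HasSum (fun m => pderivC (S m i j) s x) (pderivC (T i j) s x)) :
    HasSum (fun m => lieDeriv F (S m) i j x) (lieDeriv F T i j x) :=
  ((hasSum_sum fun s _ => (hder s).mul_left (F s x)).add
    (hasSum_sum fun _ _ => hasSum_sum fun _ _ => (hval _ _).mul_right _)).sub
    (hasSum_sum fun _ _ => hasSum_sum fun _ _ => (hval _ _).mul_right _)

end LieDerivative

theorem homogeneous_parts_invariant_of_linear_system_general {n p q : ℕ}
    (U : Set (Fin n → ℂ)) (hU : IsOpen U) (h0 : (0 : Fin n → ℂ) ∈ U)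
    (A : Matrix (Fin n) (Fin n) ℂ)
    (T : (Fin p → Fin n) → (Fin q → Fin n) → (Fin n → ℂ) → ℂ)
    (hTan : ∀ i j, AnalyticOnNhd ℂ (T i j) U)
    (hinv : ∀ i j, ∀ x ∈ U, lieDeriv (linVF A) T i j x = 0)
    (Tfam : ℕ → (Fin p → Fin n) → (Fin q → Fin n) → (Fin n → ℂ) → ℂ)
    (hhom : ∀ r i j, IsHomogDeg r (Tfam r i j))
    (hrep : ∀ i j, ∀ x ∈ U, HasSum (fun r => Tfam r i j x) (T i j x)) :
    ∀ r i j x, lieDeriv (linVF A) (Tfam r) i j x = 0 := by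
  have hU0 : U ∈ 𝓝 0 := hU.mem_nhds h0
  have hsum : ∀ i j, ∀ᶠ x in 𝓝 0, HasSum (fun r => Tfam r i j x) (T i j x) := fun i j =>
    eventually_of_mem hU0 (hrep i j)
  have hnear : ∀ i j, ∀ᶠ x in 𝓝 0,
      HasSum (fun r => lieDeriv (linVF A) (Tfam r) i j x) 0 := by
    intro i j
    obtain ⟨u, hu, hle⟩ := (hTan i j 0 h0).exists_summable_bound_of_hasSum_homogeneous
      (fun r => (hhom r i j).2) (hsum i j)
    filter_upwards [hU0, hle.eventually_nhds, (hsum i j).eventually_nhds] with x hxU hlex hsumx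
    rw [← hinv i j x hxU]
    exact hasSum_lieDeriv _ (fun i' j' => hrep i' j' x hxU) fun s =>
      hasSum_fderiv_apply_of_eventually_norm_le hu
        (Eventually.of_forall fun y r => ((hhom r i j).1 y trivial).differentiableAt)
        (hTan i j x hxU).differentiableAt hsumx hlex _
  intro r i j x
  have hline : Tendsto (fun c : ℂ => c • x) (𝓝 0) (𝓝 0) :=
    (continuous_id.smul continuous_const).tendsto' 0 0 (zero_smul ℂ x)
  have hpow : ∀ᶠ c in 𝓝 (0 : ℂ),
      HasSum (fun r => c ^ r • lieDeriv (linVF A) (Tfam r) i j x) 0 := by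
    filter_upwards [hline.eventually (hnear i j)] with c hc
    simpa only [lieDeriv_linVF_smul A (hhom _), smul_eq_mul] using hc
  exact congrFun (eq_zero_of_eventually_hasSum_pow_smul hpow) r

/-- **Corollary 1.** If `T = T^{(k)} + T^{(k+1)} + ⋯` is an analytic tensor
invariant of the linear system `ẋ = Ax` near `0`, where `T^{(r)}` has homogeneous
polynomial components of degree `r`, then each `T^{(r)}` is a tensor invariant of
`ẋ = Ax`. -/
theorem homogeneous_parts_invariant_of_linear_system {n p q : ℕ}
    (U : Set (Fin n → ℂ)) (hU : IsOpen U) (h0 : (0 : Fin n → ℂ) ∈ U)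
    (A : Matrix (Fin n) (Fin n) ℂ)
    (T : (Fin p → Fin n) → (Fin q → Fin n) → (Fin n → ℂ) → ℂ)
    (hTan : ∀ i j, AnalyticOnNhd ℂ (T i j) U)
    (hinv : ∀ i j, ∀ x ∈ U, lieDeriv (linVF A) T i j x = 0)
    (k : ℕ)
    (Tfam : ℕ → (Fin p → Fin n) → (Fin q → Fin n) → (Fin n → ℂ) → ℂ)
    (hhom : ∀ r i j, IsHomogDeg r (Tfam r i j))
    (hlow : ∀ r < k, ∀ i j x, Tfam r i j x = 0)
    (hrep : ∀ i j, ∀ x ∈ U, HasSum (fun r => Tfam r i j x) (T i j x)) :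
    ∀ r i j x, lieDeriv (linVF A) (Tfam r) i j x = 0 :=
  homogeneous_parts_invariant_of_linear_system_general U hU h0 A T hTan hinv Tfam hhom hrep
end

section
/- Fix exponents s₁,…,sₙ ∈ ℕ₊ and write ρ^S x = (ρ^{s₁}x¹,…,ρ^{sₙ}xⁿ). Let g be a positively semi-quasihomogeneous analytic vector field with quasi-homogeneous part g_m of degree m > 1, and let T_r be a quasi-homogeneous tensor field of type (p,q) of degree r with exponents s₁,…,sₙ whose components are analytic. Then for every x and all index tuples i₁,…,i_p, j₁,…,j_q ∈ {1,…,n}, as ρ → 0⁺ one has (L_g T_r)^{i₁⋯i_p}_{j₁⋯j_q}(ρ^S x) = ρ^{r+m−1−s_{j₁}−⋯−s_{j_q}+s_{i₁}+⋯+s_{i_p}}·((L_{g_m} T_r)^{i₁⋯i_p}_{j₁⋯j_q}(x) + O(ρ)). -/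
open scoped BigOperators

/-- Weighted scaling `ρ^S x = (ρ^{s₁}x¹, …, ρ^{sₙ}xⁿ)` with exponents `s` and `ρ > 0`. -/
noncomputable def wsc {n : ℕ} (s : Fin n → ℕ) (ρ : ℝ) (x : Fin n → ℂ) : Fin n → ℂ :=
  fun a => (ρ : ℂ) ^ (s a) * x a

/-- A vector field `g` on `ℂⁿ` is quasi-homogeneous of degree `m` with exponents `s`:
`g^j(ρ^S x) = ρ^{s_j + m − 1} g^j(x)` for all `ρ > 0`. -/
def IsQHVF {n : ℕ} (s : Fin n → ℕ) (m : ℕ) (g : Fin n → (Fin n → ℂ) → ℂ) : Prop :=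
  ∀ ρ : ℝ, 0 < ρ → ∀ (x : Fin n → ℂ) (j : Fin n),
    g j (wsc s ρ x) = (ρ : ℂ) ^ (s j + m - 1) * g j x

/-- `g` is positively semi-quasihomogeneous with quasi-homogeneous part `gm` of degree `m`:
`g = gm + g̃` where `g̃` is a sum of quasi-homogeneous vector fields of degrees all
strictly greater than `m`. -/
def IsPosSemiQH {n : ℕ} (s : Fin n → ℕ) (m : ℕ)
    (gm g : Fin n → (Fin n → ℂ) → ℂ) : Prop :=
  IsQHVF s m gm ∧
    ∃ h : ℕ → Fin n → (Fin n → ℂ) → ℂ,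
      (∀ d, IsQHVF s (m + 1 + d) (h d)) ∧
      (∀ (j : Fin n) (x : Fin n → ℂ), HasSum (fun d => h d j x) (g j x - gm j x))

/-- A tensor field `T` of type `(p,q)` is quasi-homogeneous of degree `l` with
exponents `s`:
`T^{i}_{j}(ρ^S x) = ρ^{l − s_{j₁} − ⋯ − s_{j_q} + s_{i₁} + ⋯ + s_{i_p}} T^{i}_{j}(x)`. -/
def IsQHTF {n p q : ℕ} (s : Fin n → ℕ) (l : ℤ)
    (T : (Fin p → Fin n) → (Fin q → Fin n) → (Fin n → ℂ) → ℂ) : Prop :=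
  ∀ ρ : ℝ, 0 < ρ → ∀ (i : Fin p → Fin n) (j : Fin q → Fin n) (x : Fin n → ℂ),
    T i j (wsc s ρ x)
      = (ρ : ℂ) ^ (l - ∑ a, (s (j a) : ℤ) + ∑ b, (s (i b) : ℤ)) * T i j x

/-!
Split `g = gm + (g - gm)`. The Lie derivative is linear in the vector field, and by the chain
rule `L_{gm} T` is itself quasi-homogeneous of degree `r + m - 1`, which gives the main term
exactly. Each component `u_k` of `g - gm` is a convergent series of quasi-homogeneous terms of
degrees `> m`, so `u_k(ρ^S y) = O(ρ^{s_k + m})` for every `y`. For the derivatives we use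
holomorphy: for `|c| ≤ 1` the entire function `ζ ↦ u_k(ζ^S (x + c e_l))` vanishes to order
`s_k + m` at `0`, so by the maximum principle it is at most `M |ζ|^{s_k + m}` on the unit disc,
with `M` uniform in `c`. Cauchy's estimate on the circle of radius `ρ^{s_l}` around `ρ^S x` then
gives `∂_l u_k(ρ^S x) = O(ρ^{s_k + m - s_l})`, and every term of `L_{g - gm} T (ρ^S x)` is
`O(ρ^{r + m - Σ s_j + Σ s_i})`.
-/

open Asymptotics Filter Topology Metric

lemma Differentiable.exists_eq_pow_mul_of_isBigO {μ : ℕ} {f : ℂ → ℂ}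
    (hf : Differentiable ℂ f) (hμ : (fun ρ : ℝ => f ρ) =O[𝓝[>] 0] (fun ρ : ℝ => ρ ^ μ)) :
    ∃ G : ℂ → ℂ, Differentiable ℂ G ∧ ∀ ζ, f ζ = ζ ^ μ * G ζ := by
  induction μ generalizing f with
  | zero => exact ⟨f, hf, by simp⟩
  | succ μ ih =>
    have hf0 : f 0 = 0 := by
      have hlim : Tendsto (fun ρ : ℝ => f ρ) (𝓝[>] 0) (𝓝 0) :=
        hμ.trans_tendsto <| by
          simpa using ((continuous_pow (μ + 1)).tendsto (0 : ℝ)).mono_left nhdsWithin_le_nhds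
      refine tendsto_nhds_unique ?_ hlim
      exact (hf.continuous.tendsto 0).comp
        (by simpa using (Complex.continuous_ofReal.tendsto 0).mono_left nhdsWithin_le_nhds)
    have hfac : ∀ ζ, f ζ = ζ * dslope f 0 ζ := fun ζ => by
      simpa [hf0] using (sub_smul_dslope f 0 ζ).symm
    have hslope : (fun ρ : ℝ => dslope f 0 ρ) =O[𝓝[>] 0] (fun ρ : ℝ => ρ ^ μ) := by
      have hinv : (fun ρ : ℝ => (ρ : ℂ)⁻¹) =O[𝓝[>] 0] (fun ρ : ℝ => ρ⁻¹) :=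
        IsBigO.of_bound 1 (Eventually.of_forall fun ρ => by simp)
      refine (hμ.mul hinv).congr' ?_ ?_
      all_goals filter_upwards [self_mem_nhdsWithin] with ρ (hρ : (0 : ℝ) < ρ)
      · rw [hfac ρ, mul_comm, ← mul_assoc, inv_mul_cancel₀ (by exact_mod_cast hρ.ne'), one_mul]
      · rw [pow_succ, mul_inv_cancel_right₀ hρ.ne']
    have hdslope : Differentiable ℂ (dslope f 0) := differentiableOn_univ.1 <|
      (Complex.differentiableOn_dslope univ_mem).2 hf.differentiableOn
    obtain ⟨G, hG, hfG⟩ := ih hdslope hslope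
    exact ⟨G, hG, fun ζ => by rw [hfac ζ, hfG ζ]; ring⟩

lemma Differentiable.norm_le_mul_pow_of_isBigO {μ : ℕ} {f : ℂ → ℂ}
    (hf : Differentiable ℂ f) (hμ : (fun ρ : ℝ => f ρ) =O[𝓝[>] 0] (fun ρ : ℝ => ρ ^ μ))
    {M : ℝ} (hM : ∀ w : ℂ, ‖w‖ = 1 → ‖f w‖ ≤ M) {ζ : ℂ} (hζ : ‖ζ‖ ≤ 1) :
    ‖f ζ‖ ≤ M * ‖ζ‖ ^ μ := by
  obtain ⟨G, hG, hfG⟩ := hf.exists_eq_pow_mul_of_isBigO hμ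
  have hGM : ‖G ζ‖ ≤ M := by
    refine Complex.norm_le_of_forall_mem_frontier_norm_le isBounded_ball hG.diffContOnCl
      (fun w hw => ?_) (by rwa [closure_ball 0 one_ne_zero, mem_closedBall_zero_iff])
    rw [frontier_ball 0 one_ne_zero, mem_sphere_zero_iff_norm] at hw
    simpa [hfG w, hw] using hM w hw
  rw [hfG, norm_mul, norm_pow, mul_comm]
  gcongr

section Scaling

variable {n : ℕ}

lemma wsc_add_smul_single (s : Fin n → ℕ) (ρ : ℝ) (x : Fin n → ℂ) (l : Fin n) (t : ℂ) :
    wsc s ρ (x + t • Pi.single l 1) = wsc s ρ x + ((ρ : ℂ) ^ s l * t) • Pi.single l 1 := by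
  funext a
  rcases eq_or_ne a l with rfl | hal
  · simp [wsc, mul_add]
  · simp [wsc, hal]

lemma hasDerivAt_pderivC {u : (Fin n → ℂ) → ℂ} {y : Fin n → ℂ} (hu : DifferentiableAt ℂ u y)
    (l : Fin n) :
    HasDerivAt (fun t : ℂ => u (y + t • Pi.single l 1)) (pderivC u l y) 0 := by
  simpa [pderivC, Function.comp_def] using hu.hasFDerivAt.comp_hasDerivAt_of_eq 0
    (((hasDerivAt_id (0 : ℂ)).smul_const (Pi.single l (1 : ℂ))).const_add y) (by simp)

lemma pderivC_sub {f g : (Fin n → ℂ) → ℂ} {y : Fin n → ℂ} (hf : DifferentiableAt ℂ f y)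
    (hg : DifferentiableAt ℂ g y) (l : Fin n) :
    pderivC (f - g) l y = pderivC f l y - pderivC g l y := by
  simp [pderivC, fderiv_sub hf hg]

lemma pderivC_wsc (s : Fin n → ℕ) {u : (Fin n → ℂ) → ℂ} (hu : Differentiable ℂ u) {e : ℤ}
    (hsc : ∀ ρ : ℝ, 0 < ρ → ∀ y, u (wsc s ρ y) = (ρ : ℂ) ^ e * u y) {ρ : ℝ} (hρ : 0 < ρ)
    (x : Fin n → ℂ) (k : Fin n) :
    pderivC u k (wsc s ρ x) = (ρ : ℂ) ^ (e - s k) * pderivC u k x := by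
  have hρk : (ρ : ℂ) ^ s k ≠ 0 := pow_ne_zero _ (by exact_mod_cast hρ.ne')
  set c := ((ρ : ℂ) ^ s k)⁻¹
  have hslice : (fun t : ℂ => u (wsc s ρ x + t • Pi.single k 1))
      = fun t => (ρ : ℂ) ^ e * u (x + (c * t) • Pi.single k 1) := by
    funext t
    rw [← hsc ρ hρ, wsc_add_smul_single, mul_inv_cancel_left₀ hρk]
  have hscaled := ((hasDerivAt_pderivC (hu x) k).comp_of_eq 0
    ((hasDerivAt_id (0 : ℂ)).const_mul c) (by simp)).const_mul ((ρ : ℂ) ^ e)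
  simp only [Function.comp_def, id, mul_one, ← hslice] at hscaled
  rw [(hasDerivAt_pderivC (hu _) k).unique hscaled, zpow_sub₀ (by exact_mod_cast hρ.ne'),
    zpow_natCast]
  ring

end Scaling

section LieDerivative

variable {n p q : ℕ}

lemma lieDeriv_sub {F G : Fin n → (Fin n → ℂ) → ℂ} {x : Fin n → ℂ}
    (hF : ∀ k, DifferentiableAt ℂ (F k) x) (hG : ∀ k, DifferentiableAt ℂ (G k) x)
    (T : (Fin p → Fin n) → (Fin q → Fin n) → (Fin n → ℂ) → ℂ)
    (i : Fin p → Fin n) (j : Fin q → Fin n) :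
    lieDeriv F T i j x - lieDeriv G T i j x = lieDeriv (F - G) T i j x := by
  simp only [lieDeriv, Pi.sub_apply, pderivC_sub (hF _) (hG _), mul_sub, sub_mul,
    Finset.sum_sub_distrib]
  ring

lemma sum_natCast_update {ι κ : Type*} [Fintype ι] [DecidableEq ι] (s : κ → ℕ) (j : ι → κ)
    (a : ι) (k : κ) :
    ∑ b, (s (Function.update j a k b) : ℤ) = ∑ b, (s (j b) : ℤ) - s (j a) + s k := by
  have hcomp : (fun b => (s (Function.update j a k b) : ℤ))
      = Function.update (fun b => (s (j b) : ℤ)) a (s k) := by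
    funext b
    rcases eq_or_ne b a with rfl | hb <;> simp [*]
  rw [hcomp, Finset.sum_update_of_mem (Finset.mem_univ a), ← Finset.sum_erase_eq_sub
    (Finset.mem_univ a), Finset.sdiff_singleton_eq_erase]
  ring

lemma IsQHVF.apply_wsc {s : Fin n → ℕ} {m : ℕ} {g : Fin n → (Fin n → ℂ) → ℂ}
    (hg : IsQHVF s m g) (hm : 1 ≤ m) {ρ : ℝ} (hρ : 0 < ρ) (y : Fin n → ℂ) (k : Fin n) :
    g k (wsc s ρ y) = (ρ : ℂ) ^ ((s k : ℤ) + m - 1) * g k y := by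
  rw [hg ρ hρ y k, ← zpow_natCast]
  congr 2
  omega

lemma zpow_mul_mul_zpow_mul {G₀ : Type*} [CommGroupWithZero G₀] {z : G₀} (hz : z ≠ 0)
    {a b c : ℤ} (h : a + b = c) (A B : G₀) : z ^ a * A * (z ^ b * B) = z ^ c * (A * B) := by
  rw [← h, zpow_add₀ hz, mul_mul_mul_comm]

lemma lieDeriv_wsc_of_isQH {s : Fin n → ℕ} {m : ℕ} (hm : 1 ≤ m) {gm : Fin n → (Fin n → ℂ) → ℂ}
    (hgm : IsQHVF s m gm) (hgmd : ∀ k, Differentiable ℂ (gm k)) {r : ℤ}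
    {T : (Fin p → Fin n) → (Fin q → Fin n) → (Fin n → ℂ) → ℂ} (hT : IsQHTF s r T)
    (hTd : ∀ i j, Differentiable ℂ (T i j)) {ρ : ℝ} (hρ : 0 < ρ)
    (i : Fin p → Fin n) (j : Fin q → Fin n) (x : Fin n → ℂ) :
    lieDeriv gm T i j (wsc s ρ x)
      = (ρ : ℂ) ^ (r + m - 1 - ∑ a, (s (j a) : ℤ) + ∑ b, (s (i b) : ℤ)) * lieDeriv gm T i j x := by
  have hρ' : (ρ : ℂ) ≠ 0 := by exact_mod_cast hρ.ne'
  have hpT : ∀ i j k, pderivC (T i j) k (wsc s ρ x) = _ :=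
    fun i j k => pderivC_wsc s (hTd i j) (fun ρ hρ y => hT ρ hρ i j y) hρ x k
  have hpgm : ∀ k l, pderivC (gm k) l (wsc s ρ x) = _ :=
    fun k l => pderivC_wsc s (hgmd k) (fun ρ hρ y => hgm.apply_wsc hm hρ y k) hρ x l
  simp only [lieDeriv, mul_sub, mul_add, Finset.mul_sum]
  congr 1
  congr 1
  all_goals refine Finset.sum_congr rfl fun a _ => ?_
  · rw [hgm.apply_wsc hm hρ, hpT]
    exact zpow_mul_mul_zpow_mul hρ' (by ring) _ _
  all_goals refine Finset.sum_congr rfl fun k _ => ?_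
  · rw [hT ρ hρ, hpgm]
    exact zpow_mul_mul_zpow_mul hρ' (by rw [sum_natCast_update]; ring) _ _
  · rw [hT ρ hρ, hpgm]
    exact zpow_mul_mul_zpow_mul hρ' (by rw [sum_natCast_update]; ring) _ _

end LieDerivative

section Asymptotics

variable {n p q : ℕ}

lemma isBigO_zpow_of_eq_zpow_mul {f : ℝ → ℂ} {e : ℤ} {c : ℂ}
    (hf : ∀ ρ : ℝ, 0 < ρ → f ρ = (ρ : ℂ) ^ e * c) : f =O[𝓝[>] 0] (fun ρ : ℝ => ρ ^ e) := by
  refine IsBigO.of_bound ‖c‖ ?_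
  filter_upwards [self_mem_nhdsWithin] with ρ (hρ : (0 : ℝ) < ρ)
  rw [hf ρ hρ, norm_mul, norm_zpow, Complex.norm_real, norm_zpow, mul_comm]

lemma Asymptotics.IsBigO.mul_zpow {R : Type*} [NormedRing R] {f g : ℝ → R} {a b c : ℤ}
    (hf : f =O[𝓝[>] 0] (fun ρ : ℝ => ρ ^ a)) (hg : g =O[𝓝[>] 0] (fun ρ : ℝ => ρ ^ b))
    (h : a + b = c) :
    (fun ρ => f ρ * g ρ) =O[𝓝[>] 0] (fun ρ : ℝ => ρ ^ c) := by
  refine (hf.mul hg).trans_eventuallyEq ?_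
  filter_upwards [self_mem_nhdsWithin] with ρ (hρ : (0 : ℝ) < ρ)
  rw [← h, zpow_add₀ hρ.ne']

lemma isBigO_pow_of_hasSum {μ : ℕ} {a : ℕ → ℂ} {F : ℝ → ℂ}
    (hF : ∀ ρ : ℝ, 0 < ρ → HasSum (fun d => (ρ : ℂ) ^ (μ + d) * a d) (F ρ)) :
    F =O[𝓝[>] 0] (fun ρ : ℝ => ρ ^ μ) := by
  have hsum := summable_norm_iff.2 (hF (1 / 2) (by norm_num)).summable
  set C := ∑' d, ‖((1 / 2 : ℝ) : ℂ) ^ (μ + d) * a d‖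
  refine IsBigO.of_bound (C * 2 ^ μ * 2) ?_
  filter_upwards [Ioc_mem_nhdsGT (by norm_num : (0 : ℝ) < 1 / 4)] with ρ ⟨hρ, hρ4⟩
  have hterm : ∀ d, ‖(ρ : ℂ) ^ (μ + d) * a d‖ ≤ C * 2 ^ μ * ρ ^ μ * (1 / 2) ^ d := by
    intro d
    have hCd : (1 / 2) ^ (μ + d) * ‖a d‖ ≤ C := by
      simpa [C] using hsum.le_tsum d fun _ _ => norm_nonneg _
    calc ‖(ρ : ℂ) ^ (μ + d) * a d‖ = (2 * ρ) ^ (μ + d) * ((1 / 2) ^ (μ + d) * ‖a d‖) := by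
          rw [norm_mul, norm_pow, Complex.norm_real, Real.norm_of_nonneg hρ.le, ← mul_assoc,
            ← mul_pow, show 2 * ρ * (1 / 2) = ρ by ring]
      _ ≤ (2 * ρ) ^ μ * (2 * ρ) ^ d * C := by
          rw [pow_add]; gcongr
      _ ≤ 2 ^ μ * ρ ^ μ * (1 / 2) ^ d * C := by
          rw [mul_pow]; gcongr; linarith
      _ = C * 2 ^ μ * ρ ^ μ * (1 / 2) ^ d := by ring
  have := (hF ρ hρ).norm_le_of_bounded (hasSum_geometric_two.mul_left _) hterm
  rw [Real.norm_of_nonneg (pow_nonneg hρ.le _)]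
  linarith

lemma IsPosSemiQH.isBigO_sub {s : Fin n → ℕ} {m : ℕ} {gm g : Fin n → (Fin n → ℂ) → ℂ}
    (hsemi : IsPosSemiQH s m gm g) (k : Fin n) (y : Fin n → ℂ) :
    (fun ρ : ℝ => g k (wsc s ρ y) - gm k (wsc s ρ y))
      =O[𝓝[>] 0] (fun ρ : ℝ => ρ ^ (s k + m)) := by
  obtain ⟨-, h, hh, hsum⟩ := hsemi
  refine isBigO_pow_of_hasSum (a := fun d => h d k y) fun ρ hρ => ?_
  convert hsum k (wsc s ρ y) using 1
  funext d
  rw [hh d ρ hρ y k]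
  congr 2
  omega

lemma exists_norm_apply_wsc_add_smul_single_le (s : Fin n → ℕ) {v : (Fin n → ℂ) → ℂ}
    (hv : Differentiable ℂ v) {μ : ℕ}
    (hvμ : ∀ y, (fun ρ : ℝ => v (wsc s ρ y)) =O[𝓝[>] 0] (fun ρ : ℝ => ρ ^ μ))
    (x : Fin n → ℂ) (l : Fin n) :
    ∃ M, ∀ c : ℂ, ‖c‖ ≤ 1 → ∀ ρ : ℝ, 0 < ρ → ρ ≤ 1 →
      ‖v (wsc s ρ (x + c • Pi.single l 1))‖ ≤ M * ρ ^ μ := by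
  set Φ : ℂ × ℂ → Fin n → ℂ := fun ζc a =>
    ζc.1 ^ s a * (x + ζc.2 • (Pi.single l 1 : Fin n → ℂ)) a
  have hΦ : Continuous Φ := continuous_pi fun a => by fun_prop
  obtain ⟨M, hM⟩ := (((isCompact_closedBall 0 1).prod (isCompact_closedBall 0 1)).image
    hΦ).exists_bound_of_continuousOn hv.continuous.continuousOn
  refine ⟨M, fun c hc ρ hρ hρ1 => ?_⟩
  have hf : Differentiable ℂ fun ζ => Φ (ζ, c) := differentiable_pi.2 fun a => by fun_prop
  have := (hv.comp hf).norm_le_mul_pow_of_isBigO (hvμ (x + c • Pi.single l 1))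
    (fun w hw => hM _ ⟨(w, c), ⟨by simp [hw], by simpa using hc⟩, rfl⟩)
    (ζ := ρ) (by simpa [abs_of_pos hρ] using hρ1)
  rwa [Complex.norm_real, Real.norm_of_nonneg hρ.le] at this

lemma isBigO_pderivC_wsc (s : Fin n → ℕ) {v : (Fin n → ℂ) → ℂ} (hv : Differentiable ℂ v)
    {μ : ℕ} (hvμ : ∀ y, (fun ρ : ℝ => v (wsc s ρ y)) =O[𝓝[>] 0] (fun ρ : ℝ => ρ ^ μ))
    (x : Fin n → ℂ) (l : Fin n) :
    (fun ρ : ℝ => pderivC v l (wsc s ρ x)) =O[𝓝[>] 0] (fun ρ : ℝ => ρ ^ ((μ : ℤ) - s l)) := by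
  obtain ⟨M, hM⟩ := exists_norm_apply_wsc_add_smul_single_le s hv hvμ x l
  refine IsBigO.of_bound M ?_
  filter_upwards [Ioc_mem_nhdsGT one_pos] with ρ ⟨hρ, hρ1⟩
  have hR : 0 < ρ ^ s l := pow_pos hρ _
  have hρl : (ρ : ℂ) ^ s l ≠ 0 := pow_ne_zero _ (by exact_mod_cast hρ.ne')
  rw [← (hasDerivAt_pderivC (hv _) l).deriv]
  calc _ ≤ M * ρ ^ μ / ρ ^ s l := by
        refine Complex.norm_deriv_le_of_forall_mem_sphere_norm_le hR
          (hv.comp (by fun_prop)).diffContOnCl fun t ht => ?_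
        rw [mem_sphere_zero_iff_norm] at ht
        have hc : ‖t / (ρ : ℂ) ^ s l‖ = 1 := by
          rw [norm_div, norm_pow, Complex.norm_real, Real.norm_of_nonneg hρ.le, ht,
            div_self hR.ne']
        simpa [wsc_add_smul_single, mul_div_cancel₀ _ hρl] using hM _ hc.le ρ hρ hρ1
    _ = M * ‖ρ ^ ((μ : ℤ) - s l)‖ := by
        rw [norm_zpow, Real.norm_of_nonneg hρ.le, zpow_sub₀ hρ.ne', zpow_natCast, zpow_natCast,
          mul_div_assoc]

lemma isBigO_lieDeriv_wsc {s : Fin n → ℕ} {u : Fin n → (Fin n → ℂ) → ℂ}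
    (hu : ∀ k, Differentiable ℂ (u k)) {e : ℕ}
    (hue : ∀ k y, (fun ρ : ℝ => u k (wsc s ρ y)) =O[𝓝[>] 0] (fun ρ : ℝ => ρ ^ (s k + e)))
    {r : ℤ} {T : (Fin p → Fin n) → (Fin q → Fin n) → (Fin n → ℂ) → ℂ} (hT : IsQHTF s r T)
    (hTd : ∀ i j, Differentiable ℂ (T i j)) (i : Fin p → Fin n) (j : Fin q → Fin n)
    (x : Fin n → ℂ) :
    (fun ρ : ℝ => lieDeriv u T i j (wsc s ρ x))
      =O[𝓝[>] 0] (fun ρ : ℝ => ρ ^ (r + e - ∑ a, (s (j a) : ℤ) + ∑ b, (s (i b) : ℤ))) := by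
  have hue' : ∀ k,
      (fun ρ : ℝ => u k (wsc s ρ x)) =O[𝓝[>] 0] (fun ρ : ℝ => ρ ^ ((s k : ℤ) + e)) :=
    fun k => by simpa only [← zpow_natCast, Nat.cast_add] using hue k x
  have hT' : ∀ i j, (fun ρ : ℝ => T i j (wsc s ρ x)) =O[𝓝[>] 0] _ :=
    fun i j => isBigO_zpow_of_eq_zpow_mul fun ρ hρ => hT ρ hρ i j x
  have hpT : ∀ k, (fun ρ : ℝ => pderivC (T i j) k (wsc s ρ x)) =O[𝓝[>] 0] _ :=
    fun k => isBigO_zpow_of_eq_zpow_mul fun ρ hρ =>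
      pderivC_wsc s (hTd i j) (fun ρ hρ y => hT ρ hρ i j y) hρ x k
  have hpu : ∀ k l, (fun ρ : ℝ => pderivC (u k) l (wsc s ρ x)) =O[𝓝[>] 0] _ :=
    fun k l => isBigO_pderivC_wsc s (hu k) (hue k) x l
  simp only [lieDeriv]
  refine ((IsBigO.fun_sum fun k _ => ?_).add
    (IsBigO.fun_sum fun a _ => IsBigO.fun_sum fun k _ => ?_)).sub
    (IsBigO.fun_sum fun b _ => IsBigO.fun_sum fun l _ => ?_)
  · exact (hue' k).mul_zpow (hpT k) (by ring)
  · exact (hT' _ _).mul_zpow (hpu k (j a)) (by rw [sum_natCast_update]; push_cast; ring)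
  · exact (hT' _ _).mul_zpow (hpu (i b) l) (by rw [sum_natCast_update]; push_cast; ring)

end Asymptotics

open Asymptotics

theorem lieDeriv_semiQH_expansion_general {n p q : ℕ}
    (s : Fin n → ℕ) (m : ℕ) (hm : 1 < m)
    (g gm : Fin n → (Fin n → ℂ) → ℂ)
    (hgan : ∀ j, AnalyticOnNhd ℂ (g j) Set.univ)
    (hgman : ∀ j, AnalyticOnNhd ℂ (gm j) Set.univ)
    (hsemi : IsPosSemiQH s m gm g)
    (r : ℤ)
    (T : (Fin p → Fin n) → (Fin q → Fin n) → (Fin n → ℂ) → ℂ)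
    (hTan : ∀ i j, AnalyticOnNhd ℂ (T i j) Set.univ)
    (hT : IsQHTF s r T) :
    ∀ (x : Fin n → ℂ) (i : Fin p → Fin n) (j : Fin q → Fin n),
      (fun ρ : ℝ => lieDeriv g T i j (wsc s ρ x)
          - (ρ : ℂ) ^ (r + (m : ℤ) - 1 - ∑ a, (s (j a) : ℤ) + ∑ b, (s (i b) : ℤ))
            * lieDeriv gm T i j x)
        =O[nhdsWithin 0 (Set.Ioi 0)]
      (fun ρ : ℝ =>
        ρ ^ (r + (m : ℤ) - 1 - ∑ a, (s (j a) : ℤ) + ∑ b, (s (i b) : ℤ) + 1)) := by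
  intro x i j
  have hgd : ∀ k, Differentiable ℂ (g k) := fun k y => (hgan k y trivial).differentiableAt
  have hgmd : ∀ k, Differentiable ℂ (gm k) := fun k y => (hgman k y trivial).differentiableAt
  have hTd : ∀ i j, Differentiable ℂ (T i j) := fun i j y => (hTan i j y trivial).differentiableAt
  have hsplit : (fun ρ : ℝ => lieDeriv (g - gm) T i j (wsc s ρ x)) =ᶠ[𝓝[>] 0]
      fun ρ => lieDeriv g T i j (wsc s ρ x)
        - (ρ : ℂ) ^ (r + (m : ℤ) - 1 - ∑ a, (s (j a) : ℤ) + ∑ b, (s (i b) : ℤ))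
          * lieDeriv gm T i j x := by
    filter_upwards [self_mem_nhdsWithin] with ρ (hρ : (0 : ℝ) < ρ)
    rw [← lieDeriv_wsc_of_isQH hm.le hsemi.1 hgmd hT hTd hρ,
      lieDeriv_sub (fun k => hgd k _) (fun k => hgmd k _)]
  have hrest :=
    isBigO_lieDeriv_wsc (fun k => (hgd k).sub (hgmd k)) hsemi.isBigO_sub hT hTd i j x
  exact hrest.congr' hsplit (Eventually.of_forall fun ρ => by ring_nf)

/-- **Lemma 3.** For a positively semi-quasihomogeneous analytic vector
field `g` with quasi-homogeneous part `gm` of degree `m > 1`, and a quasi-homogeneous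
analytic tensor field `T` of type `(p,q)` of degree `r`, one has, as `ρ → 0⁺`,
`(L_g T)^{i}_{j}(ρ^S x) = ρ^{r+m−1−Σs_{j}+Σs_{i}} ((L_{gm} T)^{i}_{j}(x) + O(ρ))`. -/
theorem lieDeriv_semiQH_expansion {n p q : ℕ}
    (s : Fin n → ℕ) (hs : ∀ a, 0 < s a) (m : ℕ) (hm : 1 < m)
    (g gm : Fin n → (Fin n → ℂ) → ℂ)
    (hgan : ∀ j, AnalyticOnNhd ℂ (g j) Set.univ)
    (hgman : ∀ j, AnalyticOnNhd ℂ (gm j) Set.univ)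
    (hsemi : IsPosSemiQH s m gm g)
    (r : ℤ)
    (T : (Fin p → Fin n) → (Fin q → Fin n) → (Fin n → ℂ) → ℂ)
    (hTan : ∀ i j, AnalyticOnNhd ℂ (T i j) Set.univ)
    (hT : IsQHTF s r T) :
    ∀ (x : Fin n → ℂ) (i : Fin p → Fin n) (j : Fin q → Fin n),
      (fun ρ : ℝ => lieDeriv g T i j (wsc s ρ x)
          - (ρ : ℂ) ^ (r + (m : ℤ) - 1 - ∑ a, (s (j a) : ℤ) + ∑ b, (s (i b) : ℤ))
            * lieDeriv gm T i j x)
        =O[nhdsWithin 0 (Set.Ioi 0)]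
      (fun ρ : ℝ =>
        ρ ^ (r + (m : ℤ) - 1 - ∑ a, (s (j a) : ℤ) + ∑ b, (s (i b) : ℤ) + 1)) :=
  lieDeriv_semiQH_expansion_general s m hm g gm hgan hgman hsemi r T hTan hT
end

section
/- Fix exponents s₁,…,sₙ ∈ ℕ₊. Let g be a positively semi-quasihomogeneous analytic vector field with quasi-homogeneous part g_m of degree m > 1, and let T be an analytic tensor invariant of type (p,q) of the system ẋ = g(x), decomposed as T = T_l + T_{l+1} + T_{l+2} + ⋯, where each T_r is a quasi-homogeneous tensor field of type (p,q) of degree r with exponents s₁,…,sₙ and T_l is not identically zero. Then T_l is a quasi-homogeneous tensor invariant of the truncated system ẋ = g_m(x), i.e., L_{g_m} T_l = 0. -/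
open scoped BigOperators

/-!
Rescale by the weighted dilation `y ↦ ρ^S y`. If `D` is the degree of the `(i,j)`-component of
`T`, the fields `g_ρ^k = ρ^{-(s_k+m-1)} g^k(ρ^S ·)` and `T_ρ = ρ^{-D} T(ρ^S ·)` satisfy
`L_{g_ρ} T_ρ = ρ^{-(D+m-1)} (L_g T)(ρ^S ·) = 0`, and as `ρ → 0⁺` they tend to `g_m` and `T_l`.
Passing to the limit in the Lie derivative also needs the first derivatives to converge. This
comes from analyticity: `Φ(y, z) = z^K T(z^S y)` is jointly analytic, the quasi-homogeneous
expansion identifies its Taylor coefficients in `z`, and derivatives in `y` commute with taking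
Taylor coefficients in `z`.
-/

open Filter Topology Set
open scoped Nat

theorem tendsto_nhdsGT_zero_of_hasSum_pow {a : ℕ → ℂ} {S : ℝ → ℂ}
    (h : ∀ ρ : ℝ, 0 < ρ → HasSum (fun d => a d * (ρ : ℂ) ^ d) (S ρ)) :
    Tendsto S (𝓝[>] 0) (𝓝 (a 0)) := by
  have hbound : Summable fun d => ‖a d‖ := by
    simpa using summable_norm_iff.2 (h 1 one_pos).summable
  have hlim : Tendsto (fun ρ : ℝ => ∑' d, a d * (ρ : ℂ) ^ d) (𝓝[>] 0)
      (𝓝 (∑' d, a d * (0 : ℂ) ^ d)) := by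
    refine tendsto_tsum_of_dominated_convergence hbound (fun d => ?_) ?_
    · have : Continuous fun ρ : ℝ => a d * (ρ : ℂ) ^ d := by fun_prop
      simpa using (this.tendsto 0).mono_left nhdsWithin_le_nhds
    · filter_upwards [Ioo_mem_nhdsGT one_pos] with ρ hρ d
      rw [norm_mul, norm_pow, Complex.norm_real, Real.norm_of_nonneg hρ.1.le]
      exact mul_le_of_le_one_right (norm_nonneg _) (pow_le_one₀ hρ.1.le hρ.2.le)
  rw [tsum_eq_single 0 fun d hd => by simp [hd], pow_zero, mul_one] at hlim
  refine hlim.congr' ?_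
  filter_upwards [self_mem_nhdsWithin] with ρ hρ using (h ρ hρ).tsum_eq

theorem eq_of_hasSum_pow {a b : ℕ → ℂ} {S : ℝ → ℂ}
    (ha : ∀ ρ : ℝ, 0 < ρ → HasSum (fun d => a d * (ρ : ℂ) ^ d) (S ρ))
    (hb : ∀ ρ : ℝ, 0 < ρ → HasSum (fun d => b d * (ρ : ℂ) ^ d) (S ρ)) : a = b := by
  have head : ∀ c : ℕ → ℂ, (∀ ρ : ℝ, 0 < ρ → HasSum (fun d => c d * (ρ : ℂ) ^ d) 0) →
      c 0 = 0 :=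
    fun c hc => tendsto_nhds_unique (tendsto_nhdsGT_zero_of_hasSum_pow hc) tendsto_const_nhds
  suffices H : ∀ e (c : ℕ → ℂ), (∀ ρ : ℝ, 0 < ρ → HasSum (fun d => c d * (ρ : ℂ) ^ d) 0) →
      c e = 0 by
    funext e
    refine sub_eq_zero.1 (H e (a - b) fun ρ hρ => ?_)
    simpa [sub_mul] using (ha ρ hρ).sub (hb ρ hρ)
  intro e
  induction e with
  | zero => exact head
  | succ e ih =>
    intro c hc
    refine ih (fun d => c (d + 1)) fun ρ hρ => ?_
    have hρ' : (ρ : ℂ) ≠ 0 := Complex.ofReal_ne_zero.2 hρ.ne'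
    have hshift := ((hasSum_nat_add_iff' 1).2 (hc ρ hρ)).mul_left (ρ : ℂ)⁻¹
    simp only [Finset.range_one, Finset.sum_singleton, head c hc, zero_mul, sub_zero,
      mul_zero] at hshift
    refine hshift.congr_fun fun d => ?_
    field_simp
    ring

theorem hasSum_taylorSeries_zero {h : ℂ → ℂ} (hh : Differentiable ℂ h) (z : ℂ) :
    HasSum (fun e => ((e ! : ℂ)⁻¹ * iteratedDeriv e h 0) * z ^ e) (h z) := by
  simpa [mul_comm, mul_left_comm, mul_assoc] using
    Complex.hasSum_taylorSeries_of_entire hh 0 z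

theorem iteratedDeriv_eq_of_hasSum_pow {h : ℂ → ℂ} (hh : Differentiable ℂ h) {a : ℕ → ℂ}
    (ha : ∀ ρ : ℝ, 0 < ρ → HasSum (fun d => a d * (ρ : ℂ) ^ d) (h ρ)) (e : ℕ) :
    iteratedDeriv e h 0 = e ! * a e := by
  rw [← congrFun (eq_of_hasSum_pow (fun ρ _ => hasSum_taylorSeries_zero hh ρ) ha) e,
    mul_inv_cancel_left₀]
  exact_mod_cast e.factorial_ne_zero

theorem hasSum_ite_mul_pow_iff {a : ℕ → ℂ} {z S : ℂ} (k : ℕ) :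
    HasSum (fun e => (if e < k then 0 else a (e - k)) * z ^ e) S
      ↔ HasSum (fun d => a d * z ^ (d + k)) S := by
  rw [← hasSum_nat_add_iff' k, Finset.sum_eq_zero fun e he => by
    simp [Finset.mem_range.1 he]]
  simp

theorem pderivC_const_mul {n : ℕ} (c : ℂ) (f : (Fin n → ℂ) → ℂ) (σ : Fin n) (x : Fin n → ℂ) :
    pderivC (fun y => c * f y) σ x = c * pderivC f σ x := by
  change fderiv ℂ (c • f) x _ = _
  rw [fderiv_const_smul_field]
  rfl

section MixedPartials

variable {E : Type*} [NormedAddCommGroup E] [NormedSpace ℂ E]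

noncomputable def dirDeriv (u : E) (F : E → ℂ) : E → ℂ := fun w => fderiv ℂ F w u

theorem AnalyticOnNhd.dirDeriv {F : E → ℂ} (hF : AnalyticOnNhd ℂ F univ) (u : E) :
    AnalyticOnNhd ℂ (_root_.dirDeriv u F) univ :=
  (ContinuousLinearMap.apply ℂ ℂ u).comp_analyticOnNhd hF.fderiv

theorem AnalyticOnNhd.iterate_dirDeriv {F : E → ℂ} (hF : AnalyticOnNhd ℂ F univ) (u : E)
    (e : ℕ) : AnalyticOnNhd ℂ ((_root_.dirDeriv u)^[e] F) univ := by
  induction e with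
  | zero => exact hF
  | succ e ih => rw [Function.iterate_succ_apply']; exact ih.dirDeriv u

theorem dirDeriv_comm {F : E → ℂ} (hF : AnalyticOnNhd ℂ F univ) (u v : E) :
    dirDeriv u (dirDeriv v F) = dirDeriv v (dirDeriv u F) := by
  have happly : ∀ (w a b : E), dirDeriv a (dirDeriv b F) w = fderiv ℂ (fderiv ℂ F) w a b :=
    fun w a b => congrArg (· a) (((ContinuousLinearMap.apply ℂ ℂ b).hasFDerivAt.comp w
      (hF.fderiv w trivial).differentiableAt.hasFDerivAt).fderiv)
  funext w
  rw [happly, happly, (hF w trivial).contDiffAt.isSymmSndFDerivAt_of_omega.eq]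

theorem dirDeriv_iterate_comm {F : E → ℂ} (hF : AnalyticOnNhd ℂ F univ) (u v : E) (e : ℕ) :
    dirDeriv v ((dirDeriv u)^[e] F) = (dirDeriv u)^[e] (dirDeriv v F) := by
  induction e with
  | zero => rfl
  | succ e ih =>
    rw [Function.iterate_succ_apply', Function.iterate_succ_apply', dirDeriv_comm
      (hF.iterate_dirDeriv u e), ih]

variable {Φ : E × ℂ → ℂ}

theorem fderiv_slice_fst (hΦ : AnalyticOnNhd ℂ Φ univ) (x v : E) (z : ℂ) :
    fderiv ℂ (fun y => Φ (y, z)) x v = dirDeriv (v, 0) Φ (x, z) :=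
  congrArg (· v) (((hΦ _ trivial).differentiableAt.hasFDerivAt.comp x
    (hasFDerivAt_prodMk_left x z)).fderiv)

theorem iteratedDeriv_slice_snd (hΦ : AnalyticOnNhd ℂ Φ univ) (e : ℕ) (y : E) :
    iteratedDeriv e (fun z => Φ (y, z)) = fun z => (dirDeriv (0, 1))^[e] Φ (y, z) := by
  induction e generalizing Φ with
  | zero => rfl
  | succ e ih =>
    funext z
    rw [iteratedDeriv_succ', Function.iterate_succ_apply]
    have hderiv : deriv (fun z => Φ (y, z)) = fun z => dirDeriv (0, 1) Φ (y, z) := by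
      funext z
      exact ((hΦ _ trivial).differentiableAt.hasFDerivAt.comp_hasDerivAt z
        ((hasDerivAt_const z y).prodMk (hasDerivAt_id z))).deriv
    rw [hderiv, ih (hΦ.dirDeriv _)]

theorem differentiable_slice_snd (hΦ : AnalyticOnNhd ℂ Φ univ) (y : E) :
    Differentiable ℂ fun z => Φ (y, z) := fun z =>
  (hΦ _ trivial).differentiableAt.comp z ((hasDerivAt_const z y).prodMk
    (hasDerivAt_id z)).differentiableAt

theorem iteratedDeriv_fderiv_slice_comm (hΦ : AnalyticOnNhd ℂ Φ univ) (e : ℕ) (x v : E)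
    (z₀ : ℂ) :
    iteratedDeriv e (fun z => fderiv ℂ (fun y => Φ (y, z)) x v) z₀
      = fderiv ℂ (fun y => iteratedDeriv e (fun z => Φ (y, z)) z₀) x v := by
  simp only [fderiv_slice_fst hΦ, iteratedDeriv_slice_snd hΦ,
    fderiv_slice_fst (hΦ.iterate_dirDeriv _ e), iteratedDeriv_slice_snd (hΦ.dirDeriv _),
    dirDeriv_iterate_comm hΦ]

end MixedPartials

section TermwiseDerivative

variable {E : Type*} [NormedAddCommGroup E] [NormedSpace ℂ E] {Φ : E × ℂ → ℂ}

theorem iteratedDeriv_slice_snd_eq_of_hasSum (hΦ : AnalyticOnNhd ℂ Φ univ) {k : ℕ}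
    {c : ℕ → E → ℂ}
    (hc : ∀ y (ρ : ℝ), 0 < ρ → HasSum (fun d => c d y * (ρ : ℂ) ^ (d + k)) (Φ (y, ρ)))
    (y : E) (e : ℕ) :
    iteratedDeriv e (fun z => Φ (y, z)) 0 = e ! * (if e < k then 0 else c (e - k) y) :=
  iteratedDeriv_eq_of_hasSum_pow (differentiable_slice_snd hΦ y)
    (fun ρ hρ => (hasSum_ite_mul_pow_iff k).2 (hc y ρ hρ)) e

theorem hasSum_fderiv_slice_fst (hΦ : AnalyticOnNhd ℂ Φ univ) {k : ℕ} {c : ℕ → E → ℂ}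
    (hc : ∀ y (ρ : ℝ), 0 < ρ → HasSum (fun d => c d y * (ρ : ℂ) ^ (d + k)) (Φ (y, ρ)))
    (x v : E) (z : ℂ) :
    HasSum (fun d => fderiv ℂ (c d) x v * z ^ (d + k)) (fderiv ℂ (fun y => Φ (y, z)) x v) := by
  have hslice : Differentiable ℂ fun z => fderiv ℂ (fun y => Φ (y, z)) x v := by
    simpa only [fderiv_slice_fst hΦ] using differentiable_slice_snd (hΦ.dirDeriv _) x
  rw [← hasSum_ite_mul_pow_iff]
  convert hasSum_taylorSeries_zero hslice z using 3 with e
  have hfac : (e ! : ℂ) ≠ 0 := by exact_mod_cast e.factorial_ne_zero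
  rw [iteratedDeriv_fderiv_slice_comm hΦ,
    funext (iteratedDeriv_slice_snd_eq_of_hasSum hΦ hc · e)]
  split_ifs
  · simp
  · change _ = _ * fderiv ℂ ((e ! : ℂ) • c (e - k)) x v
    rw [fderiv_const_smul_field]
    simp [hfac]

end TermwiseDerivative

section Rescaling

variable {n : ℕ} (s : Fin n → ℕ)

noncomputable def rescale (k : ℤ) (ρ : ℝ) (f : (Fin n → ℂ) → ℂ) (y : Fin n → ℂ) : ℂ :=
  (ρ : ℂ) ^ (-k) * f (wsc s ρ y)

variable {s}

theorem tendsto_rescale {f : (Fin n → ℂ) → ℂ} {k : ℤ} {c : ℕ → (Fin n → ℂ) → ℂ}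
    {x : Fin n → ℂ}
    (hc : ∀ ρ : ℝ, 0 < ρ → HasSum (fun d : ℕ => (ρ : ℂ) ^ (k + d) * c d x) (f (wsc s ρ x))) :
    Tendsto (fun ρ => rescale s k ρ f x) (𝓝[>] 0) (𝓝 (c 0 x)) := by
  refine tendsto_nhdsGT_zero_of_hasSum_pow (a := (c · x)) fun ρ hρ => ?_
  have hρ' : (ρ : ℂ) ≠ 0 := Complex.ofReal_ne_zero.2 hρ.ne'
  refine ((hc ρ hρ).mul_left ((ρ : ℂ) ^ (-k))).congr_fun fun d => ?_
  rw [zpow_add₀ hρ', zpow_neg, zpow_natCast]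
  field_simp

theorem tendsto_pderivC_rescale {f : (Fin n → ℂ) → ℂ} (hf : AnalyticOnNhd ℂ f univ) {k : ℤ}
    {c : ℕ → (Fin n → ℂ) → ℂ}
    (hc : ∀ x (ρ : ℝ), 0 < ρ → HasSum (fun d : ℕ => (ρ : ℂ) ^ (k + d) * c d x) (f (wsc s ρ x)))
    (σ : Fin n) (x : Fin n → ℂ) :
    Tendsto (fun ρ => pderivC (rescale s k ρ f) σ x) (𝓝[>] 0) (𝓝 (pderivC (c 0) σ x)) := by
  obtain ⟨k₀, K, rfl⟩ : ∃ k₀ K : ℕ, k = k₀ - K := ⟨_, _, k.toNat_sub_toNat_neg.symm⟩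
  -- The factor `z ^ K` turns the expansion of `Φ (y, ·)` into a power series starting at `z ^ k₀`.
  set Φ : (Fin n → ℂ) × ℂ → ℂ := fun w => w.2 ^ K * f (fun a => w.2 ^ s a * w.1 a)
  have hΦ : AnalyticOnNhd ℂ Φ univ := by
    refine (analyticOnNhd_snd.pow _).mul (hf.comp ?_ (mapsTo_univ _ _))
    refine AnalyticOnNhd.pi fun a => (analyticOnNhd_snd.pow _).mul ?_
    exact analyticOnNhd_pi_iff.1 analyticOnNhd_fst a
  have hΦc : ∀ y (ρ : ℝ), 0 < ρ →
      HasSum (fun d => c d y * (ρ : ℂ) ^ (d + k₀)) (Φ (y, ρ)) := fun y ρ hρ => by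
    have hρ' : (ρ : ℂ) ≠ 0 := Complex.ofReal_ne_zero.2 hρ.ne'
    refine ((hc y ρ hρ).mul_left ((ρ : ℂ) ^ K)).congr_fun fun d => ?_
    rw [← zpow_natCast _ K, ← zpow_natCast _ (d + k₀), ← mul_assoc, ← zpow_add₀ hρ']
    push_cast
    ring_nf
  refine tendsto_nhdsGT_zero_of_hasSum_pow (a := fun d => pderivC (c d) σ x) fun ρ hρ => ?_
  have hρ' : (ρ : ℂ) ≠ 0 := Complex.ofReal_ne_zero.2 hρ.ne'
  have hresc : rescale s (k₀ - K) ρ f = fun y => (ρ : ℂ) ^ (-(k₀ : ℤ)) * Φ (y, ρ) := by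
    funext y
    change _ = _ * ((ρ : ℂ) ^ K * f (wsc s ρ y))
    rw [rescale, ← zpow_natCast _ K, ← mul_assoc, ← zpow_add₀ hρ']
    ring_nf
  rw [hresc, pderivC_const_mul]
  refine ((hasSum_fderiv_slice_fst hΦ hΦc x (Pi.single σ 1) ρ).mul_left
    ((ρ : ℂ) ^ (-(k₀ : ℤ)))).congr_fun fun d => ?_
  rw [zpow_neg, zpow_natCast, pow_add]
  field_simp
  rfl

end Rescaling

section LieDerivative

variable {n p q : ℕ} {s : Fin n → ℕ}

theorem pderivC_rescale {f : (Fin n → ℂ) → ℂ} (hf : Differentiable ℂ f) (k : ℤ) {ρ : ℝ}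
    (hρ : ρ ≠ 0) (σ : Fin n) (x : Fin n → ℂ) :
    pderivC (rescale s k ρ f) σ x = (ρ : ℂ) ^ (s σ - k) * pderivC f σ (wsc s ρ x) := by
  set L : (Fin n → ℂ) →L[ℂ] Fin n → ℂ :=
    ContinuousLinearMap.pi fun a => ((ρ : ℂ) ^ s a) • ContinuousLinearMap.proj a
  have hL : ⇑L = wsc s ρ := by
    funext y a
    simp [L, wsc]
  have hLσ : L (Pi.single σ 1) = ((ρ : ℂ) ^ s σ) • Pi.single σ 1 := by
    funext a
    rcases eq_or_ne a σ with rfl | hne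
    · simp [L]
    · simp [L, hne]
  have hcomp := ((hf (wsc s ρ x)).hasFDerivAt.comp x (hL ▸ L.hasFDerivAt)).fderiv
  rw [Function.comp_def] at hcomp
  unfold rescale
  rw [pderivC_const_mul, pderivC, hcomp, ContinuousLinearMap.comp_apply, hLσ, map_smul,
    smul_eq_mul, pderivC, ← mul_assoc, ← zpow_natCast, ← zpow_add₀ (by exact_mod_cast hρ),
    neg_add_eq_sub]

def componentDegree (s : Fin n → ℕ) (l : ℤ) (i : Fin p → Fin n) (j : Fin q → Fin n) : ℤ :=
  l - ∑ a, (s (j a) : ℤ) + ∑ b, (s (i b) : ℤ)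

theorem sum_natCast_update_s8 {r : ℕ} (j : Fin r → Fin n) (a : Fin r) (k : Fin n) :
    ∑ a', (s (Function.update j a k a') : ℤ) = ∑ a', (s (j a') : ℤ) - s (j a) + s k := by
  simp_rw [Function.apply_update (fun _ i => (s i : ℤ))]
  rw [Finset.sum_update_of_mem (Finset.mem_univ a),
    Finset.sum_eq_add_sum_sdiff_singleton_of_mem (Finset.mem_univ a) fun a' => (s (j a') : ℤ)]
  ring

theorem componentDegree_update_lower (l : ℤ) (i : Fin p → Fin n) (j : Fin q → Fin n)
    (a : Fin q) (k : Fin n) :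
    componentDegree s l i (Function.update j a k) = componentDegree s l i j + s (j a) - s k := by
  rw [componentDegree, componentDegree, sum_natCast_update_s8]
  ring

theorem componentDegree_update_upper (l : ℤ) (i : Fin p → Fin n) (j : Fin q → Fin n)
    (b : Fin p) (k : Fin n) :
    componentDegree s l (Function.update i b k) j = componentDegree s l i j - s (i b) + s k := by
  rw [componentDegree, componentDegree, sum_natCast_update_s8]
  ring

theorem lieDeriv_rescale {g : Fin n → (Fin n → ℂ) → ℂ}
    {T : (Fin p → Fin n) → (Fin q → Fin n) → (Fin n → ℂ) → ℂ}
    (hg : ∀ k, Differentiable ℂ (g k)) (hT : ∀ i j, Differentiable ℂ (T i j)) (l μ : ℤ)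
    {ρ : ℝ} (hρ : ρ ≠ 0) (i : Fin p → Fin n) (j : Fin q → Fin n) (x : Fin n → ℂ) :
    lieDeriv (fun k => rescale s (s k + μ) ρ (g k))
        (fun i j => rescale s (componentDegree s l i j) ρ (T i j)) i j x
      = (ρ : ℂ) ^ (-(componentDegree s l i j + μ)) * lieDeriv g T i j (wsc s ρ x) := by
  have hρ' : (ρ : ℂ) ≠ 0 := Complex.ofReal_ne_zero.2 hρ
  have hscale : ∀ (e₁ e₂ : ℤ) (u v : ℂ), e₁ + e₂ = -(componentDegree s l i j + μ) →
      (ρ : ℂ) ^ e₁ * u * ((ρ : ℂ) ^ e₂ * v)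
        = (ρ : ℂ) ^ (-(componentDegree s l i j + μ)) * (u * v) :=
    fun e₁ e₂ u v he => by rw [← he, zpow_add₀ hρ']; ring
  simp only [lieDeriv, pderivC_rescale (hg _) _ hρ, pderivC_rescale (hT _ _) _ hρ, rescale,
    mul_sub, mul_add, Finset.mul_sum]
  refine congrArg₂ _ (congrArg₂ _ ?_ ?_) ?_
  · exact Finset.sum_congr rfl fun σ _ => hscale _ _ _ _ (by ring)
  · refine Finset.sum_congr rfl fun a _ => Finset.sum_congr rfl fun k _ => hscale _ _ _ _ ?_
    rw [componentDegree_update_lower]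
    ring
  · refine Finset.sum_congr rfl fun b _ => Finset.sum_congr rfl fun k _ => hscale _ _ _ _ ?_
    rw [componentDegree_update_upper]
    ring

theorem tendsto_lieDeriv {ι : Type*} {L : Filter ι}
    {F : ι → Fin n → (Fin n → ℂ) → ℂ} {F₀ : Fin n → (Fin n → ℂ) → ℂ}
    {T : ι → (Fin p → Fin n) → (Fin q → Fin n) → (Fin n → ℂ) → ℂ}
    {T₀ : (Fin p → Fin n) → (Fin q → Fin n) → (Fin n → ℂ) → ℂ} {x : Fin n → ℂ}
    (hF : ∀ k, Tendsto (fun t => F t k x) L (𝓝 (F₀ k x)))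
    (hdF : ∀ k σ, Tendsto (fun t => pderivC (F t k) σ x) L (𝓝 (pderivC (F₀ k) σ x)))
    (hT : ∀ i j, Tendsto (fun t => T t i j x) L (𝓝 (T₀ i j x)))
    (hdT : ∀ i j σ, Tendsto (fun t => pderivC (T t i j) σ x) L (𝓝 (pderivC (T₀ i j) σ x)))
    (i : Fin p → Fin n) (j : Fin q → Fin n) :
    Tendsto (fun t => lieDeriv (F t) (T t) i j x) L (𝓝 (lieDeriv F₀ T₀ i j x)) :=
  ((tendsto_finsetSum _ fun σ _ => (hF σ).mul (hdT i j σ)).add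
    (tendsto_finsetSum _ fun _ _ => tendsto_finsetSum _ fun k _ => (hT _ _).mul (hdF k _))).sub
    (tendsto_finsetSum _ fun _ _ => tendsto_finsetSum _ fun k _ => (hT _ _).mul (hdF _ k))

end LieDerivative

theorem hasSum_wsc_of_isQHTF {n p q : ℕ} {s : Fin n → ℕ} {l : ℤ}
    {Tfam : ℕ → (Fin p → Fin n) → (Fin q → Fin n) → (Fin n → ℂ) → ℂ}
    {T : (Fin p → Fin n) → (Fin q → Fin n) → (Fin n → ℂ) → ℂ}
    (hfam : ∀ d : ℕ, IsQHTF s (l + d) (Tfam d))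
    (hrep : ∀ i j x, HasSum (fun d => Tfam d i j x) (T i j x))
    (i : Fin p → Fin n) (j : Fin q → Fin n) (x : Fin n → ℂ) (ρ : ℝ) (hρ : 0 < ρ) :
    HasSum (fun d : ℕ => (ρ : ℂ) ^ (componentDegree s l i j + d) * Tfam d i j x)
      (T i j (wsc s ρ x)) := by
  refine (hrep i j (wsc s ρ x)).congr_fun fun d => ?_
  rw [hfam d ρ hρ, componentDegree]
  ring_nf

theorem IsPosSemiQH.exists_hasSum_wsc {n : ℕ} {s : Fin n → ℕ} {m : ℕ}
    {gm g : Fin n → (Fin n → ℂ) → ℂ} (hg : IsPosSemiQH s m gm g) (hm : 1 ≤ m) :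
    ∃ c : ℕ → Fin n → (Fin n → ℂ) → ℂ, c 0 = gm ∧ ∀ k x (ρ : ℝ), 0 < ρ →
      HasSum (fun d : ℕ => (ρ : ℂ) ^ ((s k : ℤ) + ((m : ℤ) - 1) + d) * c d k x)
        (g k (wsc s ρ x)) := by
  obtain ⟨hgm, h, hh, hsum⟩ := hg
  refine ⟨fun d => Nat.rec gm (fun e _ => h e) d, rfl, fun k x ρ hρ => ?_⟩
  have hexp : ∀ N : ℕ, (ρ : ℂ) ^ N = (ρ : ℂ) ^ (N : ℤ) := fun N => (zpow_natCast _ N).symm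
  have htail : (fun d : ℕ => (ρ : ℂ) ^ ((s k : ℤ) + ((m : ℤ) - 1) + (d + 1 : ℕ)) * h d k x)
      = fun d => h d k (wsc s ρ x) := funext fun d => by
    rw [hh d ρ hρ x k, hexp]
    congr 2
    omega
  have hhead : g k (wsc s ρ x) - (ρ : ℂ) ^ ((s k : ℤ) + ((m : ℤ) - 1) + (0 : ℕ)) * gm k x
      = g k (wsc s ρ x) - gm k (wsc s ρ x) := by
    rw [hgm ρ hρ x k, hexp]
    congr 3
    omega
  refine (hasSum_nat_add_iff' 1).1 ?_
  simp only [Finset.range_one, Finset.sum_singleton]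
  exact htail ▸ hhead ▸ hsum k (wsc s ρ x)

theorem lowest_QH_part_invariant_of_truncation_general {n p q : ℕ}
    (s : Fin n → ℕ) (m : ℕ) (hm : 1 < m)
    (g gm : Fin n → (Fin n → ℂ) → ℂ)
    (hgan : ∀ j, AnalyticOnNhd ℂ (g j) Set.univ)
    (hsemi : IsPosSemiQH s m gm g)
    (T : (Fin p → Fin n) → (Fin q → Fin n) → (Fin n → ℂ) → ℂ)
    (hTan : ∀ i j, AnalyticOnNhd ℂ (T i j) Set.univ)
    (hinv : ∀ i j x, lieDeriv g T i j x = 0)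
    (l : ℤ)
    (Tfam : ℕ → (Fin p → Fin n) → (Fin q → Fin n) → (Fin n → ℂ) → ℂ)
    (hfam : ∀ d : ℕ, IsQHTF s (l + (d : ℤ)) (Tfam d))
    (hrep : ∀ i j x, HasSum (fun d => Tfam d i j x) (T i j x)) :
    ∀ i j x, lieDeriv gm (Tfam 0) i j x = 0 := by
  intro i j x
  obtain ⟨c, rfl, hc⟩ := hsemi.exists_hasSum_wsc hm.le
  have hT := hasSum_wsc_of_isQHTF hfam hrep
  have hlim := tendsto_lieDeriv
    (F := fun ρ k => rescale s (s k + ((m : ℤ) - 1)) ρ (g k))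
    (T := fun ρ i j => rescale s (componentDegree s l i j) ρ (T i j))
    (fun k => tendsto_rescale (hc k x)) (fun k σ => tendsto_pderivC_rescale (hgan k) (hc k) σ x)
    (fun i j => tendsto_rescale (hT i j x))
    (fun i j σ => tendsto_pderivC_rescale (hTan i j) (hT i j) σ x) i j
  refine tendsto_nhds_unique hlim (tendsto_const_nhds.congr' ?_)
  filter_upwards [self_mem_nhdsWithin] with ρ hρ
  rw [lieDeriv_rescale (fun k => differentiableOn_univ.1 (hgan k).differentiableOn)
    (fun i j => differentiableOn_univ.1 (hTan i j).differentiableOn) l _ hρ.ne', hinv, mul_zero]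

/-- **Lemma 4.** If `g` is positively semi-quasihomogeneous with
quasi-homogeneous part `gm` of degree `m > 1`, and `T = T_l + T_{l+1} + ⋯` is an analytic
tensor invariant of `ẋ = g(x)` with `T_{l+d}` quasi-homogeneous of degree `l + d` and
`T_l ≢ 0`, then `T_l` is a quasi-homogeneous tensor invariant of the truncated system
`ẋ = gm(x)`, i.e. `L_{gm} T_l = 0`. -/
theorem lowest_QH_part_invariant_of_truncation {n p q : ℕ}
    (s : Fin n → ℕ) (hs : ∀ a, 0 < s a) (m : ℕ) (hm : 1 < m)
    (g gm : Fin n → (Fin n → ℂ) → ℂ)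
    (hgan : ∀ j, AnalyticOnNhd ℂ (g j) Set.univ)
    (hsemi : IsPosSemiQH s m gm g)
    (T : (Fin p → Fin n) → (Fin q → Fin n) → (Fin n → ℂ) → ℂ)
    (hTan : ∀ i j, AnalyticOnNhd ℂ (T i j) Set.univ)
    (hinv : ∀ i j x, lieDeriv g T i j x = 0)
    (l : ℤ)
    (Tfam : ℕ → (Fin p → Fin n) → (Fin q → Fin n) → (Fin n → ℂ) → ℂ)
    (hfam : ∀ d : ℕ, IsQHTF s (l + (d : ℤ)) (Tfam d))
    (hlow : ∃ i j x, Tfam 0 i j x ≠ 0)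
    (hrep : ∀ i j x, HasSum (fun d => Tfam d i j x) (T i j x)) :
    ∀ i j x, lieDeriv gm (Tfam 0) i j x = 0 :=
  lowest_QH_part_invariant_of_truncation_general s m hm g gm hgan hsemi T hTan hinv l Tfam hfam hrep
end

section
/- Let F(x₁,x₂) = (x₁, √2·x₂) be the vector field of the linear system ẋ₁ = x₁, ẋ₂ = √2·x₂ on ℂ². If T = (T^i_j)_{i,j∈{1,2}} is an analytic tensor field of type (1,1) in a neighbourhood of the origin of ℂ² satisfying (L_F T)^i_j = Σ_s F^s ∂T^i_j/∂x^s + Σ_k T^i_k ∂F^k/∂x^j − Σ_l T^l_j ∂F^i/∂x^l = 0 for all i, j ∈ {1,2}, then there exist constants α, β ∈ ℂ such that T^1_1 ≡ α, T^2_2 ≡ β, and T^1_2 ≡ T^2_1 ≡ 0. -/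
open scoped BigOperators

/-- The vector field of the linear system `ẋ₁ = x₁, ẋ₂ = √2·x₂` on `ℂ²`. -/
noncomputable def Fex : Fin 2 → (Fin 2 → ℂ) → ℂ :=
  ![fun x => x 0, fun x => (Real.sqrt 2 : ℂ) * x 1]

/-!
Each component `f = T^i_j` of an invariant satisfies `E f = (w_i - w_j) f`, where
`E = x₁ ∂₁ + √2 x₂ ∂₂` is differentiation along `F` and `w = (1, √2)`; the eigenvalue `c` is `0`
or `±(√2 - 1)`, so `c < 1`. Along the backward flow `φ_t x = (e^t x₁, e^{√2 t} x₂)`, `t ≤ 0`, the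
equation integrates to `f x = e^{-c t} f (φ_t x)`. If `f 0 = 0` then `f (φ_t x) = O(e^t)` as
`t → -∞`, so `f x = O(e^{(1 - c) t})`, i.e. `f x = 0`. Off the diagonal `c ≠ 0`, and the equation at
the origin gives `f 0 = 0`; on the diagonal apply this to `f - f 0`. The identity theorem carries
the conclusion from a ball around `0` to `U`.
-/

open Metric Filter Set Asymptotics Topology

namespace DiagonalLinearField

variable {n : ℕ}

noncomputable def diagField (w : Fin n → ℝ) : Fin n → (Fin n → ℂ) → ℂ :=
  fun s x => (w s : ℂ) * x s

noncomputable def diagFlow (w : Fin n → ℝ) (x : Fin n → ℂ) (t : ℝ) : Fin n → ℂ :=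
  fun s => Real.exp (w s * t) • x s

section Flow

variable {w : Fin n → ℝ}

@[simp]
lemma diagFlow_zero (x : Fin n → ℂ) : diagFlow w x 0 = x := by
  funext s; simp [diagFlow]

lemma hasDerivAt_diagFlow (x : Fin n → ℂ) (t : ℝ) :
    HasDerivAt (diagFlow w x) (fun s => diagField w s (diagFlow w x t)) t := by
  refine hasDerivAt_pi.2 fun s => ?_
  refine ((((hasDerivAt_id t).const_mul (w s)).exp).smul_const (x s)).congr_deriv ?_
  simp only [diagField, diagFlow, Complex.real_smul, id]
  push_cast
  ring

lemma norm_diagFlow_le (hw : ∀ s, 1 ≤ w s) (x : Fin n → ℂ) {t : ℝ} (ht : t ≤ 0) :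
    ‖diagFlow w x t‖ ≤ Real.exp t * ‖x‖ := by
  refine (pi_norm_le_iff_of_nonneg (by positivity)).2 fun s => ?_
  rw [diagFlow, norm_smul, Real.norm_of_nonneg (Real.exp_nonneg _)]
  gcongr
  · nlinarith [hw s]
  · exact norm_le_pi_norm x s

lemma diagFlow_mem_ball (hw : ∀ s, 1 ≤ w s) {x : Fin n → ℂ} {r : ℝ} (hx : x ∈ ball 0 r)
    {t : ℝ} (ht : t ≤ 0) : diagFlow w x t ∈ ball 0 r := by
  rw [mem_ball_zero_iff] at hx ⊢
  calc ‖diagFlow w x t‖ ≤ Real.exp t * ‖x‖ := norm_diagFlow_le hw x ht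
    _ ≤ ‖x‖ := mul_le_of_le_one_left (norm_nonneg x) (Real.exp_le_one_iff.2 ht)
    _ < r := hx

lemma tendsto_diagFlow_atBot (hw : ∀ s, 1 ≤ w s) (x : Fin n → ℂ) :
    Tendsto (diagFlow w x) atBot (𝓝 0) := by
  refine squeeze_zero_norm' ?_ (by simpa using Real.tendsto_exp_atBot.mul_const ‖x‖)
  filter_upwards [eventually_le_atBot 0] with t ht using norm_diagFlow_le hw x ht

lemma diagFlow_isBigO_exp (hw : ∀ s, 1 ≤ w s) (x : Fin n → ℂ) :
    diagFlow w x =O[atBot] Real.exp := by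
  refine IsBigO.of_bound ‖x‖ ?_
  filter_upwards [eventually_le_atBot 0] with t ht
  rw [Real.norm_of_nonneg (Real.exp_nonneg t), mul_comm]
  exact norm_diagFlow_le hw x ht

end Flow

section Eigenfunction

variable {w : Fin n → ℝ} {f : (Fin n → ℂ) → ℂ} {c r : ℝ}

lemma eq_exp_smul_comp_diagFlow (hw : ∀ s, 1 ≤ w s) (hf : DifferentiableOn ℂ f (ball 0 r))
    (hpde : ∀ y ∈ ball 0 r, fderiv ℂ f y (fun s => diagField w s y) = c * f y)
    {x : Fin n → ℂ} (hx : x ∈ ball 0 r) {t : ℝ} (ht : t ≤ 0) :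
    f x = Real.exp (-(c * t)) • f (diagFlow w x t) := by
  set g : ℝ → ℂ := fun s => Real.exp (-(c * s)) • f (diagFlow w x s)
  have hg : ∀ s ≤ 0, HasDerivAt g 0 s := by
    intro s hs
    have hmem := diagFlow_mem_ball hw hx hs
    have hfd := (hf.differentiableAt (isOpen_ball.mem_nhds hmem)).hasFDerivAt
    have hcomp := (hfd.restrictScalars ℝ).comp_hasDerivAt s (hasDerivAt_diagFlow x s)
    refine ((((hasDerivAt_id s).const_mul c).neg.exp).smul hcomp).congr_deriv ?_
    simp only [ContinuousLinearMap.coe_restrictScalars', hpde _ hmem, id, Function.comp_apply,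
      Complex.real_smul]
    push_cast
    ring
  have hcont : ContinuousOn g (Icc t 0) := fun s hs =>
    (hg s hs.2).continuousAt.continuousWithinAt
  simpa [g] using constant_of_has_deriv_right_zero hcont
    (fun s hs => (hg s hs.2.le).hasDerivWithinAt) 0 (right_mem_Icc.2 ht)

lemma eqOn_ball_zero_of_fderiv_diagField_eq (hw : ∀ s, 1 ≤ w s) (hc : c < 1)
    (hf : DifferentiableOn ℂ f (ball 0 r)) (hf0 : f 0 = 0)
    (hpde : ∀ y ∈ ball 0 r, fderiv ℂ f y (fun s => diagField w s y) = c * f y) :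
    EqOn f 0 (ball 0 r) := by
  intro x hx
  have hr : 0 < r := pos_of_mem_ball hx
  have hlin : f =O[𝓝 0] fun y => y := by
    simpa [hf0] using (hf.differentiableAt (ball_mem_nhds 0 hr)).isBigO_sub
  have hbig : (fun t => Real.exp (-(c * t)) • f (diagFlow w x t))
      =O[atBot] fun t => Real.exp (-(c * t)) • Real.exp t :=
    (isBigO_refl _ _).smul
      ((hlin.comp_tendsto (tendsto_diagFlow_atBot hw x)).trans (diagFlow_isBigO_exp hw x))
  have hlim : Tendsto (fun t => Real.exp (-(c * t)) • Real.exp t) atBot (𝓝 0) := by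
    have hexp : (fun t => Real.exp (-(c * t)) • Real.exp t)
        = fun t => Real.exp ((1 - c) * t) := by
      funext t; rw [smul_eq_mul, ← Real.exp_add]; ring_nf
    rw [hexp]
    exact Real.tendsto_exp_atBot.comp (tendsto_id.const_mul_atBot (sub_pos.2 hc))
  have hconst : (fun t => Real.exp (-(c * t)) • f (diagFlow w x t)) =ᶠ[atBot] fun _ => f x :=
    (eventually_le_atBot 0).mono fun t ht => (eq_exp_smul_comp_diagFlow hw hf hpde hx ht).symm
  exact tendsto_nhds_unique tendsto_const_nhds ((hbig.trans_tendsto hlim).congr' hconst)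

variable {U : Set (Fin n → ℂ)}

lemma eqOn_zero_of_fderiv_diagField_eq (hU : IsOpen U) (hUc : IsPreconnected U) (h0 : 0 ∈ U)
    (hw : ∀ s, 1 ≤ w s) (hc : c < 1) (hf : AnalyticOnNhd ℂ f U) (hf0 : f 0 = 0)
    (hpde : ∀ y ∈ U, fderiv ℂ f y (fun s => diagField w s y) = c * f y) :
    EqOn f 0 U := by
  obtain ⟨r, hr, hball⟩ := Metric.isOpen_iff.mp hU 0 h0
  have hloc : f =ᶠ[𝓝 0] 0 := eventuallyEq_of_mem (ball_mem_nhds 0 hr)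
    (eqOn_ball_zero_of_fderiv_diagField_eq hw hc (hf.differentiableOn.mono hball) hf0
      fun y hy => hpde y (hball hy))
  exact hf.eqOn_zero_of_preconnected_of_eventuallyEq_zero hUc h0 hloc

lemma eqOn_zero_of_fderiv_diagField_eq_of_ne_zero (hU : IsOpen U) (hUc : IsPreconnected U)
    (h0 : 0 ∈ U) (hw : ∀ s, 1 ≤ w s) (hc0 : c ≠ 0) (hc : c < 1) (hf : AnalyticOnNhd ℂ f U)
    (hpde : ∀ y ∈ U, fderiv ℂ f y (fun s => diagField w s y) = c * f y) :
    EqOn f 0 U := by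
  have hfield0 : (fun s => diagField w s 0) = 0 := by
    funext s; simp [diagField]
  have hf0 : (c : ℂ) * f 0 = 0 := by
    simpa [hfield0] using (hpde 0 h0).symm
  exact eqOn_zero_of_fderiv_diagField_eq hU hUc h0 hw hc hf
    ((mul_eq_zero.1 hf0).resolve_left (Complex.ofReal_ne_zero.2 hc0)) hpde

lemma eqOn_const_of_fderiv_diagField_eq_zero (hU : IsOpen U) (hUc : IsPreconnected U)
    (h0 : 0 ∈ U) (hw : ∀ s, 1 ≤ w s) (hf : AnalyticOnNhd ℂ f U)
    (hpde : ∀ y ∈ U, fderiv ℂ f y (fun s => diagField w s y) = 0) :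
    EqOn f (fun _ => f 0) U := by
  have hg : AnalyticOnNhd ℂ (fun y => f y - f 0) U := hf.sub analyticOnNhd_const
  have hsub := eqOn_zero_of_fderiv_diagField_eq (c := 0) hU hUc h0 hw zero_lt_one hg
    (sub_self (f 0)) fun y hy => by
      rw [fderiv_sub_const, hpde y hy]; simp
  exact fun x hx => sub_eq_zero.1 (hsub hx)

end Eigenfunction

lemma sum_mul_pderivC_eq_fderiv (f : (Fin n → ℂ) → ℂ) (v x : Fin n → ℂ) :
    ∑ s, v s * pderivC f s x = fderiv ℂ f x v := by
  conv_rhs => rw [pi_eq_sum_univ' v, map_sum]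
  simp [pderivC]

lemma pderivC_diagField (w : Fin n → ℝ) (k j : Fin n) (x : Fin n → ℂ) :
    pderivC (diagField w k) j x = if j = k then (w k : ℂ) else 0 := by
  have h : HasFDerivAt (diagField w k) ((w k : ℂ) • ContinuousLinearMap.proj k) x :=
    (ContinuousLinearMap.proj (R := ℂ) (φ := fun _ : Fin n => ℂ) k).hasFDerivAt.const_mul _
  simp [pderivC, h.fderiv, Pi.single_apply, eq_comm]

lemma fderiv_diagField_eq_of_lie_eq_zero {w : Fin n → ℝ}
    {T : Fin n → Fin n → (Fin n → ℂ) → ℂ} {i j : Fin n} {x : Fin n → ℂ}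
    (h : (∑ t, diagField w t x * pderivC (T i j) t x)
        + (∑ k, T i k x * pderivC (diagField w k) j x)
        - ∑ t, T t j x * pderivC (diagField w i) t x = 0) :
    fderiv ℂ (T i j) x (fun s => diagField w s x) = ((w i - w j : ℝ) : ℂ) * T i j x := by
  simp only [sum_mul_pderivC_eq_fderiv, pderivC_diagField, mul_ite, mul_zero,
    Finset.sum_ite_eq, Finset.sum_ite_eq', Finset.mem_univ, if_true] at h
  push_cast
  linear_combination h

end DiagonalLinearField

open DiagonalLinearField

lemma Fex_eq_diagField : Fex = diagField ![1, √2] := by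
  funext k x
  fin_cases k <;> simp [Fex, diagField]

/-- Any analytic tensor invariant of type `(1,1)` of the system
`ẋ₁ = x₁, ẋ₂ = √2·x₂` near the origin of `ℂ²` is diagonal with constant entries. -/
theorem one_one_invariant_of_sqrt2_system
    (U : Set (Fin 2 → ℂ)) (hU : IsOpen U) (hUconn : IsPreconnected U)
    (h0 : (0 : Fin 2 → ℂ) ∈ U)
    (T : Fin 2 → Fin 2 → (Fin 2 → ℂ) → ℂ)
    (hTan : ∀ i j, AnalyticOnNhd ℂ (T i j) U)
    (hinv : ∀ (i j : Fin 2), ∀ x ∈ U,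
      (∑ t, Fex t x * pderivC (T i j) t x)
        + (∑ k, T i k x * pderivC (Fex k) j x)
        - ∑ t, T t j x * pderivC (Fex i) t x = 0) :
    ∃ α β : ℂ, ∀ x ∈ U,
      T 0 0 x = α ∧ T 1 1 x = β ∧ T 0 1 x = 0 ∧ T 1 0 x = 0 := by
  set w : Fin 2 → ℝ := ![1, √2]
  simp only [Fex_eq_diagField] at hinv
  have hsqrt : 1 < √2 ∧ √2 < 2 := by
    constructor <;> nlinarith [Real.sq_sqrt (zero_le_two : (0 : ℝ) ≤ 2), Real.sqrt_nonneg 2]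
  have hw : ∀ s, 1 ≤ w s := by
    intro s; fin_cases s <;> simp [w, hsqrt.1.le]
  have hpde : ∀ i j, ∀ x ∈ U,
      fderiv ℂ (T i j) x (fun s => diagField w s x) = ((w i - w j : ℝ) : ℂ) * T i j x :=
    fun i j x hx => fderiv_diagField_eq_of_lie_eq_zero (hinv i j x hx)
  have hdiag : ∀ i, EqOn (T i i) (fun _ => T i i 0) U := fun i =>
    eqOn_const_of_fderiv_diagField_eq_zero hU hUconn h0 hw (hTan i i) fun x hx => by
      simpa using hpde i i x hx
  have hoff : ∀ i j, w i - w j ≠ 0 → w i - w j < 1 → EqOn (T i j) 0 U := fun i j hne hlt =>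
    eqOn_zero_of_fderiv_diagField_eq_of_ne_zero hU hUconn h0 hw hne hlt (hTan i j) (hpde i j)
  refine ⟨T 0 0 0, T 1 1 0, fun x hx =>
    ⟨hdiag 0 hx, hdiag 1 hx, hoff 0 1 ?_ ?_ hx, hoff 1 0 ?_ ?_ hx⟩⟩ <;> simp [w] <;> linarith
end
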